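/- arXiv:1905.11821 — 10 statements merged into one kernel-verified Lean document; each statement's English description precedes it below -/
import Mathlib

section
/- Let (G,·) be a group, θ an automorphism of G, and b ∈ G such that θ(b) = b and θ^{n-1}(x) = b·x·b⁻¹ for all x ∈ G. Define f(x₁,…,xₙ) = x₁·θ(x₂)·θ²(x₃)⋯θ^{n-1}(xₙ)·b. Then (G,f) is an n-ary group (f is n-ary associative and all one-variable equations have unique solutions). -/
/-- `f` is an associative `n`-ary operation: inserting the inner application of `f`
at any position of a sequence of `2n-1` elements gives the same result. -/
def IsNAryAssoc {G : Type*} (n : ℕ) (f : List G → G) : Prop :=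
  ∀ (s : List G) (i j : ℕ), s.length = 2 * n - 1 → i + n ≤ s.length → j + n ≤ s.length →
    f (s.take i ++ f ((s.drop i).take n) :: s.drop (i + n)) =
      f (s.take j ++ f ((s.drop j).take n) :: s.drop (j + n))

/-- every one-variable equation `f (a₁, …, a_{i-1}, x, a_{i+1}, …, aₙ) = c`
has a unique solution `x`. -/
def NAryUniqueSolutions {G : Type*} (n : ℕ) (f : List G → G) : Prop :=
  ∀ (a : List G) (i : ℕ), a.length = n → i < n → ∀ c : G,
    ∃! x : G, f (a.take i ++ x :: a.drop (i + 1)) = c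

/-- `(G, f)` is an `n`-ary (polyadic) group. -/
def IsNAryGroup {G : Type*} (n : ℕ) (f : List G → G) : Prop :=
  IsNAryAssoc n f ∧ NAryUniqueSolutions n f

/-! With `P(x₁,…,xₖ) = x₁·θ(x₂)⋯θ^{k-1}(xₖ)` one has `P(s ++ t) = P(s)·θ^{|s|}(P(t))`, so
`f = P·b`. Since `θ` fixes `b` and `θ^{n-1}` is conjugation by `b`, we have `b·θ(y) = θⁿ(y)·b`;
hence contracting any `n` consecutive entries of a sequence `s` of length `2n-1` yields
`P(s)·b·b`, whatever the position. In `f(a₁,…,x,…,aₙ)` the unknown enters as `L·θⁱ(x)·R`,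
and `x ↦ L·θⁱ(x)·R` is a bijection of `G`. -/

section TwistedProd

variable {M F : Type*} [Monoid M] [FunLike F M M] [MonoidHomClass F M M] (σ : F)

def twistedProd (l : List M) : M := (l.mapIdx fun i x => σ^[i] x).prod

lemma prod_mapIdx_iterate_add (l : List M) (k : ℕ) :
    (l.mapIdx fun i x => σ^[i + k] x).prod = σ^[k] (twistedProd σ l) := by
  induction l generalizing k with
  | nil => simp [twistedProd]
  | cons x l ih =>
    have hshift : ∀ m, (l.mapIdx fun i y => σ^[i + 1 + m] y).prod = σ^[m + 1] (twistedProd σ l) :=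
      fun m => by simpa only [Nat.add_assoc, Nat.add_comm 1 m] using ih (m + 1)
    simp only [twistedProd, List.mapIdx_cons, List.prod_cons, iterate_map_mul] at hshift ⊢
    rw [hshift k, ← Nat.zero_add 1, hshift 0, ← Function.iterate_add_apply]
    simp

lemma twistedProd_append (s t : List M) :
    twistedProd σ (s ++ t) = twistedProd σ s * σ^[s.length] (twistedProd σ t) := by
  rw [twistedProd, List.mapIdx_append, List.prod_append, prod_mapIdx_iterate_add]
  rfl

lemma twistedProd_cons (x : M) (l : List M) : twistedProd σ (x :: l) = x * σ (twistedProd σ l) := by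
  simpa [twistedProd] using twistedProd_append σ [x] l

lemma twistedProd_append_cons (s t : List M) (x : M) :
    twistedProd σ (s ++ x :: t) =
      twistedProd σ s * σ^[s.length] x * σ^[s.length + 1] (twistedProd σ t) := by
  rw [twistedProd_append, twistedProd_cons, iterate_map_mul, mul_assoc,
    Function.iterate_succ_apply]

/-- The operation `der_{σ,b}` of the Hosszú–Gloskin theorem. -/
def derivedOp (b : M) (l : List M) : M := twistedProd σ l * b

variable {σ}

lemma derivedOp_nested {b : M} {n : ℕ} (hb : σ b = b)
    (hcomm : ∀ y, b * σ y = σ^[n] y * b) {s : List M} {i : ℕ} (hi : i + n ≤ s.length) :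
    derivedOp σ b (s.take i ++ derivedOp σ b ((s.drop i).take n) :: s.drop (i + n)) =
      twistedProd σ s * b * b := by
  have hA : (s.take i).length = i := by rw [List.length_take]; omega
  have hB : ((s.drop i).take n).length = n := by
    rw [List.length_take, List.length_drop]; omega
  have hsplit : s = s.take i ++ ((s.drop i).take n ++ s.drop (i + n)) := by
    rw [← List.drop_drop, List.take_append_drop, List.take_append_drop]
  conv_rhs => rw [hsplit, twistedProd_append, twistedProd_append, hA, hB]
  rw [derivedOp, derivedOp, twistedProd_append, twistedProd_cons, hA, mul_assoc _ b, hcomm,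
    iterate_map_mul, iterate_map_mul, iterate_map_mul, Function.iterate_fixed hb,
    ← Function.iterate_add_apply, Nat.add_comm]
  simp only [mul_assoc]

lemma isNAryAssoc_derivedOp {b : M} {n : ℕ} (hb : σ b = b)
    (hcomm : ∀ y, b * σ y = σ^[n] y * b) : IsNAryAssoc n (derivedOp σ b) := by
  intro s i j _ hi hj
  rw [derivedOp_nested hb hcomm hi, derivedOp_nested hb hcomm hj]

end TwistedProd

lemma naryUniqueSolutions_derivedOp {G F : Type*} [Group G] [FunLike F G G] [MonoidHomClass F G G]
    {σ : F} (hσ : Function.Bijective σ) (n : ℕ) (b : G) :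
    NAryUniqueSolutions n (derivedOp σ b) := by
  intro a i _ _ c
  simp only [derivedOp, twistedProd_append_cons, mul_assoc]
  exact ((Group.mulLeft_bijective _).comp
    ((Group.mulRight_bijective _).comp (hσ.iterate _))).existsUnique c

theorem theta_b_derived_is_nary_group {G : Type*} [Group G] (n : ℕ) (hn : 2 ≤ n)
    (θ : G ≃* G) (b : G) (hb : θ b = b)
    (hconj : ∀ x : G, (⇑θ)^[n - 1] x = b * x * b⁻¹) :
    IsNAryGroup n (fun l : List G => (l.mapIdx fun i x => (⇑θ)^[i] x).prod * b) := by
  have hcomm : ∀ y, b * θ y = θ^[n] y * b := fun y => by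
    obtain ⟨m, rfl⟩ := Nat.exists_eq_add_of_le' (one_le_two.trans hn)
    rw [Nat.add_sub_cancel] at hconj
    rw [Function.iterate_add_apply, Function.iterate_one, hconj, inv_mul_cancel_right]
  exact ⟨isNAryAssoc_derivedOp hb hcomm, naryUniqueSolutions_derivedOp θ.bijective n b⟩
end

section
/- Let (G,f) be an n-ary group with n ≥ 3, and fix a ∈ G. Define x ∗ y = f(x, a^{(n-2)}, y), where a^{(n-2)} denotes n−2 copies of a. Then (G,∗) is a group whose identity element is the skew element ā, and the inverse of x in (G,∗) is f(ā, x^{(n-3)}, x̄, ā). -/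
section Retract

variable {G : Type*} {n : ℕ} {f : List G → G}

theorem IsNAryAssoc.reassoc (hf : IsNAryAssoc n f) {u v w u' v' w' : List G}
    (hv : v.length = n) (hv' : v'.length = n) (hlen : (u ++ v ++ w).length = 2 * n - 1)
    (heq : u ++ v ++ w = u' ++ v' ++ w') :
    f (u ++ f v :: w) = f (u' ++ f v' :: w') := by
  have key := hf _ u.length u'.length hlen (by simp at hlen ⊢; omega)
    (by rw [heq] at hlen ⊢; simp at hlen ⊢; omega)
  conv_lhs at key => simp [← hv]
  conv_rhs at key => rw [heq]; simp [← hv']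
  exact key

theorem NAryUniqueSolutions.cancel_last (hf : NAryUniqueSolutions n f) {p : List G}
    (hp : p.length + 1 = n) {x y : G} (hxy : f (p ++ [x]) = f (p ++ [y])) : x = y :=
  (hf (p ++ [y]) p.length (by simpa using hp) (by omega) _).unique (by simpa using hxy)
    (by simp)

theorem NAryUniqueSolutions.cancel_first (hf : NAryUniqueSolutions n f) {p : List G}
    (hp : p.length + 1 = n) {x y : G} (hxy : f (x :: p) = f (y :: p)) : x = y :=
  (hf (y :: p) 0 (by simpa using hp) (by omega) _).unique (by simpa using hxy) (by simp)

theorem List.replicate_append_replicate_comm {α : Type*} (a : α) (i j : ℕ) :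
    List.replicate i a ++ List.replicate j a = List.replicate j a ++ List.replicate i a := by
  rw [List.replicate_append_replicate, List.replicate_append_replicate, Nat.add_comm]

namespace IsNAryGroup

theorem apply_replicate_skew_replicate (hf : IsNAryGroup n f) {x s : G}
    (hs : f (List.replicate (n - 1) x ++ [s]) = x) {i j : ℕ} (hij : i + j + 1 = n) :
    f (List.replicate i x ++ s :: List.replicate j x) = x := by
  subst hij
  rw [Nat.add_sub_cancel] at hs
  have key := hf.1.reassoc (u := List.replicate i x) (v := List.replicate (i + j) x ++ [s])
    (w := List.replicate j x) (u' := List.replicate (i + j) x)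
    (v' := List.replicate i x ++ s :: List.replicate j x) (w' := [])
    (by simp) (by simp; omega) (by simp; omega) (by
      simp only [List.append_assoc, List.singleton_append, List.append_nil]
      rw [← List.append_assoc, List.replicate_append_replicate_comm, List.append_assoc])
  rw [hs] at key
  refine (hf.2.cancel_last (p := List.replicate (i + j) x) (by simp) ?_).symm
  rw [← key, ← List.replicate_succ', ← List.replicate_succ, List.replicate_append_replicate]
  rfl

theorem apply_cons_replicate_skew_replicate (hf : IsNAryGroup n f) {x s : G}
    (hs : f (List.replicate (n - 1) x ++ [s]) = x) {i j : ℕ} (hij : i + j + 2 = n) (y : G) :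
    f (y :: (List.replicate i x ++ s :: List.replicate j x)) = y := by
  have key := hf.1.reassoc (u := []) (v := y :: (List.replicate i x ++ s :: List.replicate j x))
    (w := List.replicate (i + j + 1) x) (u' := [y])
    (v' := List.replicate i x ++ s :: List.replicate (j + 1) x) (w' := List.replicate (i + j) x)
    (by simp; omega) (by simp; omega) (by simp; omega) (by
      simp only [List.append_assoc, List.cons_append, List.nil_append,
        List.replicate_append_replicate]
      congr 4
      omega)
  rw [hf.apply_replicate_skew_replicate hs (by omega), ← List.replicate_succ] at key
  exact hf.2.cancel_first (p := List.replicate (i + j + 1) x) (by simp; omega) key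

theorem apply_replicate_skew_replicate_append (hf : IsNAryGroup n f) {x s : G}
    (hs : f (List.replicate (n - 1) x ++ [s]) = x) {i j : ℕ} (hij : i + j + 2 = n) (y : G) :
    f (List.replicate i x ++ s :: (List.replicate j x ++ [y])) = y := by
  have key := hf.1.reassoc (u := List.replicate (i + j + 1) x)
    (v := List.replicate i x ++ s :: (List.replicate j x ++ [y])) (w := [])
    (u' := List.replicate (i + j) x) (v' := List.replicate (i + 1) x ++ s :: List.replicate j x)
    (w' := [y])
    (by simp; omega) (by simp; omega) (by simp; omega) (by
      simp only [List.append_assoc, List.cons_append, List.append_nil,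
        ← List.append_assoc (List.replicate _ x) (List.replicate _ x),
        List.replicate_append_replicate]
      congr 2
      omega)
  have hrep : List.replicate (i + j) x ++ [x, y] = List.replicate (i + j + 1) x ++ [y] := by
    simp [List.replicate_succ']
  rw [hf.apply_replicate_skew_replicate hs (by omega), hrep] at key
  exact hf.2.cancel_last (p := List.replicate (i + j + 1) x) (by simp; omega) key

end IsNAryGroup

def retract (n : ℕ) (f : List G → G) (a x y : G) : G :=
  f (x :: (List.replicate (n - 2) a ++ [y]))

theorem retract_assoc (hf : IsNAryAssoc n f) (hn : 2 ≤ n) (a x y z : G) :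
    retract n f a (retract n f a x y) z = retract n f a x (retract n f a y z) :=
  hf.reassoc (u := []) (v := x :: (List.replicate (n - 2) a ++ [y]))
    (w := List.replicate (n - 2) a ++ [z]) (u' := x :: List.replicate (n - 2) a)
    (v' := y :: (List.replicate (n - 2) a ++ [z])) (w' := [])
    (by simp; omega) (by simp; omega) (by simp; omega) (by simp)

theorem retract_skew_left (hf : IsNAryGroup n f) (hn : 2 ≤ n) {a s : G}
    (hs : f (List.replicate (n - 1) a ++ [s]) = a) (x : G) : retract n f a s x = x :=
  hf.apply_replicate_skew_replicate_append hs (i := 0) (by omega) x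

theorem retract_inv_left (hf : IsNAryGroup n f) (hn : 3 ≤ n) {a s x t : G}
    (hs : f (List.replicate (n - 1) a ++ [s]) = a) (ht : f (List.replicate (n - 1) x ++ [t]) = x) :
    retract n f a (f (s :: (List.replicate (n - 3) x ++ [t, s]))) x = s :=
  calc retract n f a (f (s :: (List.replicate (n - 3) x ++ [t, s]))) x
      = f (s :: (List.replicate (n - 3) x ++ [t, retract n f a s x])) := by
        unfold retract
        simpa using hf.1.reassoc (u := []) (v := s :: (List.replicate (n - 3) x ++ [t, s]))
          (w := List.replicate (n - 2) a ++ [x]) (u' := s :: (List.replicate (n - 3) x ++ [t]))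
          (v' := s :: (List.replicate (n - 2) a ++ [x])) (w' := [])
          (by simp; omega) (by simp; omega) (by simp; omega) (by simp)
    _ = f (s :: (List.replicate (n - 3) x ++ [t, x])) := by rw [retract_skew_left hf (by omega) hs]
    _ = s := hf.apply_cons_replicate_skew_replicate ht (i := n - 3) (j := 1) (by omega) s

end Retract

theorem retract_is_group {G : Type*} (n : ℕ) (hn : 3 ≤ n) (f : List G → G)
    (h : IsNAryGroup n f) (skew : G → G)
    (hskew : ∀ x : G, f (List.replicate (n - 1) x ++ [skew x]) = x) (a : G)
    (star : G → G → G)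
    (hstar : ∀ x y : G, star x y = f (x :: (List.replicate (n - 2) a ++ [y])))
    (inv : G → G)
    (hinv : ∀ x : G, inv x = f (skew a :: (List.replicate (n - 3) x ++ [skew x, skew a]))) :
    (∀ x y z : G, star (star x y) z = star x (star y z)) ∧
    (∀ x : G, star (skew a) x = x) ∧ (∀ x : G, star x (skew a) = x) ∧
    (∀ x : G, star (inv x) x = skew a) ∧ (∀ x : G, star x (inv x) = skew a) := by
  obtain rfl : star = retract n f a := funext₂ hstar
  have inv_left (x : G) : retract n f a (inv x) x = skew a :=
    hinv x ▸ retract_inv_left h hn (hskew a) (hskew x)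
  let _ : Mul G := ⟨retract n f a⟩
  let _ : One G := ⟨skew a⟩
  let _ : Inv G := ⟨inv⟩
  let _ : Group G := Group.ofLeftAxioms (retract_assoc h.1 (by omega) a)
    (retract_skew_left h (by omega) (hskew a))
    inv_left
  exact ⟨mul_assoc, one_mul, mul_one, inv_mul_cancel, mul_inv_cancel⟩
end

section
/- Let (G,f) be an n-ary group and let a, c ∈ G. Then the retracts ret_a(G,f) and ret_c(G,f) are isomorphic as groups. -/
/-!
Fix a word `w` of length `n - 2` and put `x ∘_w y = f (x, w, y)`. Associativity of `f` gives
`(x ∘_v y) ∘_w z = x ∘_v (y ∘_w z)` for any two such words, and unique solvability of `f`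
makes each `∘_w` solvable on both sides; hence the retract `∘_a` is a group. Relative to that
group, the mixed associativity laws force `x ∘_c y = x * g * y` with `g = 1 ∘_c 1`, and right
multiplication by `g⁻¹` is an isomorphism from `∘_a` onto this twisted multiplication.
-/

noncomputable abbrev Group.ofExistsMulEq {G : Type*} [Mul G] [Nonempty G]
    (assoc : ∀ a b c : G, a * b * c = a * (b * c))
    (exists_mul_eq : ∀ a b : G, ∃ x, a * x = b) (exists_mul_eq' : ∀ a b : G, ∃ x, x * a = b) :
    Group G :=
  let a₀ := Classical.arbitrary G
  let e := (exists_mul_eq' a₀ a₀).choose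
  have one_mul (b : G) : e * b = b := by
    obtain ⟨x, rfl⟩ := exists_mul_eq a₀ b
    rw [← assoc, (exists_mul_eq' a₀ a₀).choose_spec]
  letI : One G := ⟨e⟩
  letI : Inv G := ⟨fun b => (exists_mul_eq' b e).choose⟩
  Group.ofLeftAxioms assoc one_mul fun b => (exists_mul_eq' b e).choose_spec

section MixedAssoc

variable {M : Type*} [Group M]

theorem eq_mul_mul_of_mixed_assoc {t : M → M → M}
    (ht_left : ∀ x y z, t (x * y) z = x * t y z) (ht_right : ∀ x y z, t x y * z = t x (y * z))
    (x y : M) : t x y = x * t 1 1 * y := by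
  calc t x y = t (x * 1) (1 * y) := by rw [mul_one, one_mul]
    _ = x * t 1 1 * y := by rw [ht_left, ← ht_right, mul_assoc]

theorem exists_equiv_map_mul_eq_mul_mul (g : M) :
    ∃ e : M ≃ M, ∀ x y, e (x * y) = e x * g * e y :=
  ⟨Equiv.mulRight g⁻¹, fun x y => by simp [mul_assoc]⟩

end MixedAssoc

namespace NAry

variable {G : Type*} {n : ℕ} {f : List G → G}

/-- The retract `ret_a (G, f)` is `binaryOp f (List.replicate (n - 2) a)`. -/
def binaryOp (f : List G → G) (w : List G) (x y : G) : G :=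
  f (x :: (w ++ [y]))

theorem binaryOp_assoc (hf : IsNAryAssoc n f) (hn : 2 ≤ n) {v w : List G}
    (hv : v.length = n - 2) (hw : w.length = n - 2) (x y z : G) :
    binaryOp f w (binaryOp f v x y) z = binaryOp f v x (binaryOp f w y z) := by
  obtain ⟨m, rfl⟩ : ∃ m, n = m + 2 := ⟨n - 2, by omega⟩
  simp only [Nat.add_sub_cancel] at hv hw
  subst hv
  have key := hf (x :: (v ++ y :: (w ++ [z]))) 0 (v.length + 1)
    (by simp [hw]; omega) (by simp [hw]) (by simp [hw]; omega)
  simpa [binaryOp, hw, List.take_append, List.take_of_length_le, List.drop_eq_nil_of_le] using key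

theorem exists_binaryOp_eq (hf : NAryUniqueSolutions n f) (hn : 2 ≤ n) {w : List G}
    (hw : w.length = n - 2) (x z : G) : ∃ y, binaryOp f w x y = z := by
  obtain ⟨m, rfl⟩ : ∃ m, n = m + 2 := ⟨n - 2, by omega⟩
  simp only [Nat.add_sub_cancel] at hw
  subst hw
  simpa [binaryOp] using (hf (x :: (w ++ [x])) (w.length + 1) (by simp) (by omega) z).exists

theorem exists_binaryOp_eq' (hf : NAryUniqueSolutions n f) (hn : 2 ≤ n) {w : List G}
    (hw : w.length = n - 2) (y z : G) : ∃ x, binaryOp f w x y = z :=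
  (hf (y :: (w ++ [y])) 0 (by simp [hw]; omega) (by omega) z).exists

end NAry

open NAry in
/-- All retracts of an `n`-ary group are isomorphic: there is a bijection of `G`
carrying the retract operation over `a` to the retract operation over `c`. -/
theorem retracts_isomorphic {G : Type*} (n : ℕ) (hn : 3 ≤ n) (f : List G → G)
    (h : IsNAryGroup n f) (a c : G) :
    ∃ e : G ≃ G, ∀ x y : G,
      e (f (x :: (List.replicate (n - 2) a ++ [y]))) =
        f (e x :: (List.replicate (n - 2) c ++ [e y])) := by
  obtain ⟨hassoc, hsol⟩ := h
  have hn : 2 ≤ n := by omega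
  have ha : (List.replicate (n - 2) a).length = n - 2 := List.length_replicate
  have hc : (List.replicate (n - 2) c).length = n - 2 := List.length_replicate
  have : Nonempty G := ⟨a⟩
  let : Mul G := ⟨binaryOp f (List.replicate (n - 2) a)⟩
  let : Group G := Group.ofExistsMulEq (binaryOp_assoc hassoc hn ha ha)
    (exists_binaryOp_eq hsol hn ha) (exists_binaryOp_eq' hsol hn ha)
  have ht := eq_mul_mul_of_mixed_assoc (t := binaryOp f (List.replicate (n - 2) c))
    (binaryOp_assoc hassoc hn ha hc) (binaryOp_assoc hassoc hn hc ha)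
  obtain ⟨e, he⟩ := exists_equiv_map_mul_eq_mul_mul (binaryOp f (List.replicate (n - 2) c) 1 1)
  exact ⟨e, fun x y => (he x y).trans (ht _ _).symm⟩
end

section
/- Hosszú–Gloskin theorem: Let (G,f) be an n-ary group. Then there exist a group operation · on G, an automorphism θ of (G,·), and an element b ∈ G such that (1) θ(b) = b, (2) θ^{n-1}(x) = b·x·b⁻¹ for all x ∈ G, and (3) f(x₁,…,xₙ) = x₁·θ(x₂)·θ²(x₃)⋯θ^{n-1}(xₙ)·b for all x₁,…,xₙ ∈ G. -/
/-- `(mul, e, inv)` is a group structure on `G`. -/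
def IsGroupStr {G : Type*} (mul : G → G → G) (e : G) (inv : G → G) : Prop :=
  (∀ x y z : G, mul (mul x y) z = mul x (mul y z)) ∧
  (∀ x : G, mul e x = x) ∧ (∀ x : G, mul x e = x) ∧
  (∀ x : G, mul (inv x) x = e) ∧ (∀ x : G, mul x (inv x) = e)

/-!
Fix any `a ∈ G`. The retract `x * y = f (x, a, …, a, y)` is a group; call its identity `1`, and
put `b = f (1, …, 1)` and `θ x = f (1, x, 1, …, 1) * b⁻¹`. Associativity of `f` gives the
translation rules `z * f (c, …) = f (z * c, …)` and `f (…, z) * y = f (…, z * y)`, so that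
`f (θ x, 1, …, 1) = θ x * b = f (1, x, 1, …, 1)`. Regrouping against a neutral sequence
`(1, …, 1, z)` propagates this to any position: `f (…, 1, x, …) = f (…, θ x, 1, …)`. Sliding every
argument to the front in this way yields `f (x₁, …, xₙ) = x₁ θ(x₂) ⋯ θⁿ⁻¹(xₙ) b`, and the same
sliding shows that `θ` is multiplicative, fixes `b`, and that `θⁿ⁻¹` is conjugation by `b`, which
makes `θ` bijective.
-/

open List

section Retract

variable {G : Type*} {n : ℕ} {f : List G → G}

theorem IsNAryAssoc.regroup (hA : IsNAryAssoc n f) {p q r p' q' r' : List G}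
    (hq : q.length = n) (hq' : q'.length = n) (hlen : p.length + r.length = n - 1)
    (heq : p ++ q ++ r = p' ++ q' ++ r') :
    f (p ++ f q :: r) = f (p' ++ f q' :: r') := by
  have hsplit : ∀ {p q r : List G}, q.length = n →
      f ((p ++ q ++ r).take p.length ++ f (((p ++ q ++ r).drop p.length).take n) ::
        (p ++ q ++ r).drop (p.length + n)) = f (p ++ f q :: r) := by
    rintro p q r rfl
    simp
  have hlen' := congrArg length heq
  simp only [length_append] at hlen'
  have key := hA (p ++ q ++ r) p.length p'.length (by simp only [length_append]; omega)
    (by simp only [length_append]; omega) (by simp only [length_append]; omega)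
  rwa [hsplit hq, heq, hsplit hq'] at key

theorem NAryUniqueSolutions.exists_apply_eq (hU : NAryUniqueSolutions n f) {p q : List G}
    (hpq : p.length + q.length + 1 = n) (c : G) : ∃ x, f (p ++ x :: q) = c := by
  have key := (hU (p ++ c :: q) p.length (by simp; omega) (by omega) c).exists
  rwa [take_left, ← drop_drop, drop_left] at key

def retractMul (n : ℕ) (f : List G → G) (a x y : G) : G :=
  f (x :: (replicate (n - 2) a ++ [y]))

theorem retractMul_apply_cons (hA : IsNAryAssoc n f) (hn : 2 ≤ n) (a z c : G) {l : List G}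
    (hl : l.length = n - 1) :
    retractMul n f a z (f (c :: l)) = f (retractMul n f a z c :: l) :=
  hA.regroup (p := z :: replicate (n - 2) a) (r := []) (p' := [])
    (q' := z :: (replicate (n - 2) a ++ [c])) (by simp; omega) (by simp; omega) (by simp; omega)
    (by simp)

theorem apply_append_retractMul (hA : IsNAryAssoc n f) (hn : 2 ≤ n) (a z y : G) {p : List G}
    (hp : p.length = n - 1) :
    retractMul n f a (f (p ++ [z])) y = f (p ++ [retractMul n f a z y]) :=
  hA.regroup (p := []) (q := p ++ [z]) (r := replicate (n - 2) a ++ [y]) (r' := [])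
    (q' := z :: (replicate (n - 2) a ++ [y])) (by simp; omega) (by simp; omega) (by simp; omega)
    (by simp)

theorem retractMul_assoc (hA : IsNAryAssoc n f) (hn : 2 ≤ n) (a x y z : G) :
    retractMul n f a (retractMul n f a x y) z = retractMul n f a x (retractMul n f a y z) :=
  apply_append_retractMul hA hn a y z (p := x :: replicate (n - 2) a) (by simp; omega)

theorem retractMul_left_identity (hA : IsNAryAssoc n f) (hU : NAryUniqueSolutions n f)
    (hn : 2 ≤ n) {a e : G} (he : f (e :: replicate (n - 1) a) = a) (x : G) :
    retractMul n f a e x = x := by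
  obtain ⟨m, rfl⟩ : ∃ m, n = m + 2 := ⟨n - 2, by omega⟩
  obtain ⟨y, hy⟩ := hU.exists_apply_eq (p := replicate (m + 1) a) (q := []) (by simp) x
  have hea : retractMul (m + 2) f a e a = a := by
    simpa [retractMul, replicate_succ'] using he
  rw [← hy, replicate_succ, cons_append, retractMul_apply_cons hA hn a e a (by simp), hea]

noncomputable abbrev retractGroup (hG : IsNAryGroup n f) (hn : 2 ≤ n) (a : G) : Group G :=
  have one_spec := hG.2.exists_apply_eq (p := []) (q := replicate (n - 1) a) (by simp; omega) a
  letI : Mul G := ⟨retractMul n f a⟩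
  letI : One G := ⟨one_spec.choose⟩
  have inv_spec (x : G) := hG.2.exists_apply_eq (p := [])
    (q := replicate (n - 2) a ++ [x]) (by simp; omega) 1
  letI : Inv G := ⟨fun x => (inv_spec x).choose⟩
  Group.ofLeftAxioms (retractMul_assoc hG.1 hn a)
    (retractMul_left_identity hG.1 hG.2 hn one_spec.choose_spec) (fun x => (inv_spec x).choose_spec)

end Retract

section Decomposition

variable {G : Type*} [Group G] {n : ℕ} {f : List G → G} {a : G}

variable (n f a) in
def IsNAryRetract : Prop := ∀ x y : G, retractMul n f a x y = x * y

theorem mul_apply_cons (hA : IsNAryAssoc n f) (hmul : IsNAryRetract n f a)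
    (hn : 2 ≤ n) (z c : G) {l : List G} (hl : l.length = n - 1) :
    z * f (c :: l) = f (z * c :: l) := by
  rw [← hmul, ← hmul, retractMul_apply_cons hA hn a z c hl]

theorem apply_append_mul (hA : IsNAryAssoc n f) (hmul : IsNAryRetract n f a)
    (hn : 2 ≤ n) (z y : G) {p : List G} (hp : p.length = n - 1) :
    f (p ++ [z]) * y = f (p ++ [z * y]) := by
  rw [← hmul, ← hmul, apply_append_retractMul hA hn a z y hp]

variable (n f) in
def hgElem : G := f (replicate n 1)

variable (n f) in
def hgShift (x : G) : G := f (1 :: x :: replicate (n - 2) 1) * (hgElem n f)⁻¹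

theorem apply_cons_replicate_one (hA : IsNAryAssoc n f)
    (hmul : IsNAryRetract n f a) (hn : 2 ≤ n) (z : G) :
    f (z :: replicate (n - 1) 1) = z * hgElem n f := by
  obtain ⟨m, rfl⟩ : ∃ m, n = m + 1 := ⟨n - 1, by omega⟩
  rw [hgElem, replicate_succ, mul_apply_cons hA hmul hn z 1 (by simp), mul_one]
  rfl

theorem apply_replicate_one_concat (hA : IsNAryAssoc n f)
    (hmul : IsNAryRetract n f a) (hn : 2 ≤ n) (x : G) :
    f (replicate (n - 1) 1 ++ [x]) = hgElem n f * x := by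
  obtain ⟨m, rfl⟩ : ∃ m, n = m + 1 := ⟨n - 1, by omega⟩
  rw [hgElem, replicate_succ', apply_append_mul hA hmul hn 1 x (by simp), one_mul]
  rfl

theorem hgShift_cons_replicate_one (hA : IsNAryAssoc n f)
    (hmul : IsNAryRetract n f a) (hn : 2 ≤ n) (x : G) :
    f (hgShift n f x :: replicate (n - 1) 1) = f (1 :: x :: replicate (n - 2) 1) := by
  rw [apply_cons_replicate_one hA hmul hn, hgShift, inv_mul_cancel_right]

theorem exists_neutral_seq (hG : IsNAryGroup n f) (hmul : IsNAryRetract n f a)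
    (hn : 2 ≤ n) : ∃ z, ∀ c, f (replicate (n - 2) 1 ++ [z, c]) = c := by
  obtain ⟨z, hz⟩ :=
    hG.2.exists_apply_eq (p := replicate (n - 2) 1) (q := [1]) (by simp; omega) 1
  refine ⟨z, fun c => ?_⟩
  have h := apply_append_mul hG.1 hmul hn 1 c (p := replicate (n - 2) 1 ++ [z]) (by simp; omega)
  simp only [append_assoc, singleton_append, one_mul, hz] at h
  exact h.symm

theorem apply_append_one_cons (hG : IsNAryGroup n f) (hmul : IsNAryRetract n f a)
    {u v : List G} (huv : u.length + v.length = n - 2) (hv : v ≠ []) (x : G) :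
    f (u ++ 1 :: x :: v) = f (u ++ hgShift n f x :: 1 :: v) := by
  obtain ⟨c, t, rfl⟩ := exists_cons_of_ne_nil hv
  simp only [length_cons] at huv
  obtain ⟨z, hz⟩ := exists_neutral_seq hG hmul (by omega)
  have regroup (y₁ y₂ : G) := hG.1.regroup (p := u ++ [y₁, y₂])
    (q := replicate (n - 2) 1 ++ [z, c]) (r := t) (p' := u)
    (q' := y₁ :: y₂ :: replicate (n - 2) 1) (r' := z :: c :: t)
    (by simp; omega) (by simp; omega) (by simp; omega) (by simp)
  have hθ := hgShift_cons_replicate_one hG.1 hmul (by omega) x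
  rw [show n - 1 = n - 2 + 1 by omega, replicate_succ] at hθ
  simp only [hz, append_assoc, cons_append, nil_append] at regroup
  rw [regroup 1 x, regroup (hgShift n f x) 1, hθ]

theorem apply_replicate_one_append_cons (hG : IsNAryGroup n f)
    (hmul : IsNAryRetract n f a) (k : ℕ) (x : G) {v : List G}
    (hk : k + 1 + v.length = n) (hv : v ≠ []) :
    f (replicate k 1 ++ x :: v) = f ((hgShift n f)^[k] x :: (replicate k 1 ++ v)) := by
  induction k generalizing x v with
  | zero => simp
  | succ k ih =>
    rw [replicate_succ', append_assoc, singleton_append,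
      apply_append_one_cons hG hmul (by simp; omega) hv, ih _ (by simp; omega) (cons_ne_nil 1 v),
      Function.iterate_succ_apply]
    simp

theorem hgShift_mul (hG : IsNAryGroup n f) (hmul : IsNAryRetract n f a)
    (hn : 3 ≤ n) (x y : G) : hgShift n f (x * y) = hgShift n f x * hgShift n f y := by
  obtain ⟨m, rfl⟩ : ∃ m, n = m + 3 := ⟨n - 3, by omega⟩
  set θ := hgShift (m + 3) f
  have regroup (w x' : G) := hG.1.regroup (p := [w]) (q := x' :: (replicate (m + 1) a ++ [y]))
    (r := replicate (m + 1) 1) (p' := w :: x' :: replicate m a)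
    (q' := a :: y :: replicate (m + 1) 1) (r' := []) (by simp) (by simp) (by simp; omega)
    (by simp [replicate_succ'])
  have h1y : f (1 :: (replicate (m + 1) a ++ [y])) = y := (hmul 1 y).trans (one_mul y)
  have hlam : f (1 :: x * y :: replicate (m + 1) 1) = θ x * f (1 :: y :: replicate (m + 1) 1) :=
    calc f (1 :: x * y :: replicate (m + 1) 1)
        = f (1 :: x :: (replicate m a ++ [f (a :: y :: replicate (m + 1) 1)])) := by
          rw [← hmul x y]
          exact regroup 1 x
      _ = f (θ x :: 1 :: (replicate m a ++ [f (a :: y :: replicate (m + 1) 1)])) :=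
          apply_append_one_cons hG hmul (u := []) (by simp) (by simp) x
      _ = f (θ x :: y :: replicate (m + 1) 1) :=
          (regroup (θ x) 1).symm.trans (by rw [singleton_append, h1y])
      _ = θ x * f (1 :: y :: replicate (m + 1) 1) := by
          rw [mul_apply_cons hG.1 hmul (by omega) _ 1 (by simp), mul_one]
  calc θ (x * y) = f (1 :: x * y :: replicate (m + 1) 1) * (hgElem (m + 3) f)⁻¹ := rfl
    _ = θ x * θ y := by rw [hlam, mul_assoc]; rfl

theorem hgShift_hgElem (hA : IsNAryAssoc n f) (hmul : IsNAryRetract n f a)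
    (hn : 2 ≤ n) : hgShift n f (hgElem n f) = hgElem n f := by
  have h := hA.regroup (p := [1]) (q := replicate n 1) (r := replicate (n - 2) 1) (p' := [])
    (q' := replicate n 1) (r' := replicate (n - 1) 1) (by simp) (by simp) (by simp; omega)
    (by simp only [← replicate_add, singleton_append, ← replicate_succ, nil_append]
        congr 1
        omega)
  rw [singleton_append, nil_append, apply_cons_replicate_one hA hmul hn] at h
  simp only [hgShift, hgElem] at h ⊢
  rw [h, mul_inv_cancel_right]

theorem hgShift_iterate_pred (hG : IsNAryGroup n f) (hmul : IsNAryRetract n f a)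
    (hn : 3 ≤ n) (x : G) :
    (hgShift n f)^[n - 1] x = hgElem n f * x * (hgElem n f)⁻¹ := by
  have hF : f (replicate (n - 2) 1 ++ [x, 1]) = (hgShift n f)^[n - 2] x * hgElem n f := by
    rw [apply_replicate_one_append_cons hG hmul (n - 2) x (by simp; omega) (cons_ne_nil 1 []),
      ← replicate_succ', show n - 2 + 1 = n - 1 by omega,
      apply_cons_replicate_one hG.1 hmul (by omega)]
  have hθF : hgShift n f (f (replicate (n - 2) 1 ++ [x, 1])) = hgElem n f * x := by
    have h := hG.1.regroup (p := [1]) (q := replicate (n - 2) 1 ++ [x, 1])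
      (r := replicate (n - 2) 1) (p' := []) (q' := replicate (n - 1) 1 ++ [x])
      (r' := replicate (n - 1) 1) (by simp; omega) (by simp; omega) (by simp; omega)
      (by rw [show n - 1 = n - 2 + 1 by omega]; simp [replicate_succ])
    rw [singleton_append, nil_append, apply_replicate_one_concat hG.1 hmul (by omega),
      apply_cons_replicate_one hG.1 hmul (by omega)] at h
    rw [hgShift, h, mul_inv_cancel_right]
  let θ : G →* G := MonoidHom.mk' (hgShift n f) (hgShift_mul hG hmul hn)
  have hθ_inv : hgShift n f (hgElem n f)⁻¹ = (hgElem n f)⁻¹ := by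
    simpa [θ, hgShift_hgElem hG.1 hmul (by omega : 2 ≤ n)] using map_inv θ (hgElem n f)
  calc (hgShift n f)^[n - 1] x = hgShift n f ((hgShift n f)^[n - 2] x) := by
        rw [show n - 1 = n - 2 + 1 by omega, Function.iterate_succ_apply']
    _ = hgShift n f (f (replicate (n - 2) 1 ++ [x, 1]) * (hgElem n f)⁻¹) := by
        rw [hF, mul_inv_cancel_right]
    _ = hgElem n f * x * (hgElem n f)⁻¹ := by rw [hgShift_mul hG hmul hn, hθF, hθ_inv]

theorem hgShift_bijective (hG : IsNAryGroup n f) (hmul : IsNAryRetract n f a)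
    (hn : 3 ≤ n) : Function.Bijective (hgShift n f) := by
  have h : Function.Bijective (hgShift n f)^[n - 2 + 1] := by
    rw [show n - 2 + 1 = n - 1 by omega,
      funext (hgShift_iterate_pred hG hmul hn), ← funext (MulAut.conj_apply (hgElem n f))]
    exact (MulAut.conj (hgElem n f)).bijective
  exact ⟨(Function.iterate_succ _ _ ▸ h.1).of_comp,
    (Function.iterate_succ' _ _ ▸ h.2).of_comp⟩

theorem apply_replicate_one_append_eq_foldr (hG : IsNAryGroup n f)
    (hmul : IsNAryRetract n f a) (hn : 3 ≤ n) {k : ℕ} {l : List G}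
    (hk : k + l.length = n) :
    f (replicate k 1 ++ l) =
      (l.mapIdx fun i x => (hgShift n f)^[k + i] x).foldr (· * ·) (hgElem n f) := by
  induction l generalizing k with
  | nil =>
    obtain rfl : k = n := by simpa using hk
    simp [hgElem]
  | cons x v ih =>
    simp only [length_cons] at hk
    rcases eq_or_ne v [] with rfl | hv
    · obtain rfl : k = n - 1 := by simp at hk; omega
      simp only [mapIdx_cons, mapIdx_nil, foldr_cons, foldr_nil, add_zero]
      rw [apply_replicate_one_concat hG.1 hmul (by omega), hgShift_iterate_pred hG hmul hn,
        inv_mul_cancel_right]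
    · have hpeel := mul_apply_cons hG.1 hmul (by omega) ((hgShift n f)^[k] x) 1
        (l := replicate k 1 ++ v) (by simp; omega)
      rw [mul_one, ← cons_append, ← replicate_succ, ih (by omega)] at hpeel
      rw [apply_replicate_one_append_cons hG hmul k x (by omega) hv, ← hpeel]
      simp only [mapIdx_cons, foldr_cons, add_zero, add_assoc, add_comm 1]

end Decomposition

/-- Hosszú–Gloskin theorem. -/
theorem hosszu_gloskin {G : Type*} (n : ℕ) (hn : 3 ≤ n) (f : List G → G)
    (h : IsNAryGroup n f) :
    ∃ (mul : G → G → G) (e : G) (inv : G → G) (θ : G → G) (b : G),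
      IsGroupStr mul e inv ∧
      Function.Bijective θ ∧ (∀ x y : G, θ (mul x y) = mul (θ x) (θ y)) ∧
      θ b = b ∧
      (∀ x : G, θ^[n - 1] x = mul (mul b x) (inv b)) ∧
      (∀ l : List G, l.length = n → f l = (l.mapIdx fun i x => θ^[i] x).foldr mul b) := by
  -- any element of `G` will do for `a`; `f []` is one, so `G` is nonempty
  let _ : Group G := retractGroup h (by omega) (f [])
  have hmul : IsNAryRetract n f (f []) := fun _ _ => rfl
  refine ⟨(· * ·), 1, (·⁻¹), hgShift n f, hgElem n f,
    ⟨mul_assoc, one_mul, mul_one, inv_mul_cancel, mul_inv_cancel⟩, hgShift_bijective h hmul hn,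
    hgShift_mul h hmul hn, hgShift_hgElem h.1 hmul (by omega), hgShift_iterate_pred h hmul hn,
    fun l hl => ?_⟩
  simpa using apply_replicate_one_append_eq_foldr h hmul hn (k := 0) (l := l) (by omega)
end

section
/- Let F(X) be a free group on a set X, H a subgroup, and 𝒰 a right transversal of H with, for each w ∈ F(X), ŵ denoting the unique element of 𝒰 with Hw = Hŵ. Then the set { u·x·(ûx)⁻¹ : u ∈ 𝒰, x ∈ X, u·x·(ûx)⁻¹ ≠ 1 } generates H (and if 𝒰 is a Schreier transversal, it is a free basis of H). -/
/-!
Write `γ(u, w) = u w (hat (u w))⁻¹`. Since `hat (hat (u a) b) = hat (u a b)`, these satisfy the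
cocycle identity `γ(u, a b) = γ(u, a) γ(hat (u a), b)`, so by induction on `w` every `γ(u, w)`
lies in the subgroup generated by the set `S` of nontrivial `γ(u, x)`; and every `h ∈ H` is
`γ(hat 1, (hat 1)⁻¹ h) γ(hat 1, (hat 1)⁻¹)⁻¹`.

Freeness comes from Reidemeister rewriting. Read a word letter by letter, remembering the
prefix `g` read so far, and replace the letter `x` by the generator `γ(hat g, x)` (by `1` if that
is trivial). This is a right action of `F(X)` on `F(X) × F(S)`, and since the new letter depends
only on the coset `H g`, reading the elements of `H` from `(1, 1)` gives a homomorphism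
`ρ : H → F(S)`. If `𝒰` is a Schreier transversal, reading `u ∈ 𝒰` only produces trivial letters,
as every prefix of `u` lies in `𝒰`; hence `ρ (u x (hat (u x))⁻¹)` is the generator itself, and
`ρ` is a left inverse of the surjection `F(S) → H`.
-/

open FreeGroup MulOpposite

namespace FreeGroup

variable {X K : Type*} [Group K] (c : FreeGroup X → X → K)

def rewritingStep (x : X) : Equiv.Perm (FreeGroup X × K) where
  toFun p := (p.1 * of x, p.2 * c p.1 x)
  invFun p := (p.1 * (of x)⁻¹, p.2 * (c (p.1 * (of x)⁻¹) x)⁻¹)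
  left_inv := by rintro ⟨g, k⟩; simp
  right_inv := by rintro ⟨g, k⟩; simp

-- Passing through `ᵐᵒᵖ` makes this a right action: a word is read from left to right.
def rewriting (w : FreeGroup X) : Equiv.Perm (FreeGroup X × K) :=
  (lift (fun x => op (rewritingStep c x)) :
    FreeGroup X →* (Equiv.Perm (FreeGroup X × K))ᵐᵒᵖ) w |>.unop

@[simp]
lemma rewriting_one (p : FreeGroup X × K) : rewriting c 1 p = p := by
  simp [rewriting]

lemma rewriting_mul (a b : FreeGroup X) (p : FreeGroup X × K) :
    rewriting c (a * b) p = rewriting c b (rewriting c a p) := by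
  simp [rewriting]

lemma rewriting_of (x : X) (p : FreeGroup X × K) :
    rewriting c (of x) p = (p.1 * of x, p.2 * c p.1 x) := by
  simp only [rewriting, lift_apply_of, unop_op]
  rfl

lemma rewriting_inv_of (x : X) (p : FreeGroup X × K) :
    rewriting c (of x)⁻¹ p = (p.1 * (of x)⁻¹, p.2 * (c (p.1 * (of x)⁻¹) x)⁻¹) := by
  simp only [rewriting, _root_.map_inv, lift_apply_of, unop_inv, unop_op, Equiv.Perm.coe_inv]
  rfl

@[simp]
lemma rewriting_fst (w : FreeGroup X) (p : FreeGroup X × K) : (rewriting c w p).1 = p.1 * w := by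
  induction w using FreeGroup.induction_on generalizing p with
  | C1 => simp
  | of x => simp [rewriting_of]
  | inv_of x _ => simp [rewriting_inv_of]
  | mul a b iha ihb => rw [rewriting_mul, ihb, iha, mul_assoc]

lemma rewriting_snd_eq_mul (w g : FreeGroup X) (k : K) :
    (rewriting c w (g, k)).2 = k * (rewriting c w (g, 1)).2 := by
  induction w using FreeGroup.induction_on generalizing g k with
  | C1 => simp
  | of x => simp [rewriting_of]
  | inv_of x _ => simp [rewriting_inv_of]
  | mul a b iha ihb =>
    rw [rewriting_mul, rewriting_mul, ← Prod.mk.eta (p := rewriting c a (g, k)),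
      ← Prod.mk.eta (p := rewriting c a (g, 1)), ihb, ihb (k := (rewriting c a (g, 1)).2), iha,
      rewriting_fst, rewriting_fst, mul_assoc]

lemma rewriting_inv_apply_of_eq {w : FreeGroup X} {p q : FreeGroup X × K}
    (h : rewriting c w p = q) : rewriting c w⁻¹ q = p := by
  rw [← h, ← rewriting_mul, mul_inv_cancel, rewriting_one]

variable {c} {H : Subgroup (FreeGroup X)}

lemma rewriting_snd_mul_left_of_mem (hc : ∀ h ∈ H, ∀ g x, c (h * g) x = c g x)
    (w g : FreeGroup X) (k : K) {h : FreeGroup X} (hh : h ∈ H) :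
    (rewriting c w (h * g, k)).2 = (rewriting c w (g, k)).2 := by
  induction w using FreeGroup.induction_on generalizing g k with
  | C1 => simp
  | of x => simp [rewriting_of, hc h hh]
  | inv_of x _ => simp [rewriting_inv_of, mul_assoc, hc h hh]
  | mul a b iha ihb =>
    rw [rewriting_mul, rewriting_mul, ← Prod.mk.eta (p := rewriting c a (h * g, k)),
      ← Prod.mk.eta (p := rewriting c a (g, k)), rewriting_fst, rewriting_fst, iha, mul_assoc, ihb]

def rewritingHom (hc : ∀ h ∈ H, ∀ g x, c (h * g) x = c g x) : H →* K where
  toFun h := (rewriting c h (1, 1)).2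
  map_one' := by simp
  map_mul' h₁ h₂ := by
    rw [Subgroup.coe_mul, rewriting_mul, ← Prod.mk.eta (p := rewriting c h₁ (1, 1)), rewriting_fst,
      rewriting_snd_eq_mul, one_mul, ← mul_one (h₁ : FreeGroup X),
      rewriting_snd_mul_left_of_mem hc _ _ _ h₁.2]

lemma rewriting_mk_of_forall_take_mem {U : Set (FreeGroup X)}
    (hc : ∀ u ∈ U, ∀ x, u * of x ∈ U → c u x = 1) {l : List (X × Bool)}
    (hl : ∀ i, mk (l.take i) ∈ U) (k : K) :
    rewriting c (mk l) (1, k) = (mk l, k) := by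
  induction l using List.reverseRecOn with
  | nil => simp [← one_eq_mk]
  | append_singleton l a ih =>
    obtain ⟨x, b⟩ := a
    have hl' : ∀ i, mk (l.take i) ∈ U := fun i => by
      simpa [List.take_append_of_le_length (min_le_right _ _), ← List.take_eq_take_min]
        using hl (min i l.length)
    have hmem : mk l ∈ U := by simpa using hl' l.length
    have hmem' : mk l * mk [(x, b)] ∈ U := by
      simpa [mul_mk, List.take_of_length_le] using hl (l.length + 1)
    rw [← mul_mk, rewriting_mul, ih hl']
    cases b with
    | true =>
      rw [show mk [(x, true)] = of x from rfl] at hmem' ⊢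
      rw [rewriting_of, hc _ hmem x hmem', mul_one]
    | false =>
      rw [show mk [(x, false)] = (of x)⁻¹ by rw [of, inv_mk]; rfl] at hmem' ⊢
      rw [rewriting_inv_of, hc _ hmem' x (by simpa using hmem), inv_one, mul_one]

end FreeGroup

structure IsRightTransversalMap {G : Type*} [Group G] (H : Subgroup G) (U : Set G) (hat : G → G) :
    Prop where
  mem : ∀ g, hat g ∈ U
  mul_inv_mem : ∀ g, g * (hat g)⁻¹ ∈ H
  eq_of_mul_inv_mem : ∀ g, ∀ u ∈ U, g * u⁻¹ ∈ H → u = hat g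

namespace IsRightTransversalMap

variable {G : Type*} [Group G] {H : Subgroup G} {U : Set G} {hat : G → G}

lemma hat_eq_of_mul_inv_mem (hT : IsRightTransversalMap H U hat) {a b : G} (h : a * b⁻¹ ∈ H) :
    hat a = hat b :=
  (hT.eq_of_mul_inv_mem a _ (hT.mem b) (by
    simpa [mul_assoc] using H.mul_mem h (hT.mul_inv_mem b))).symm

lemma hat_of_mem (hT : IsRightTransversalMap H U hat) {u : G} (hu : u ∈ U) : hat u = u :=
  (hT.eq_of_mul_inv_mem u u hu (by simp)).symm

lemma hat_mul_left (hT : IsRightTransversalMap H U hat) {h : G} (hh : h ∈ H) (g : G) :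
    hat (h * g) = hat g :=
  hT.hat_eq_of_mul_inv_mem (by simpa using hh)

lemma hat_hat_mul (hT : IsRightTransversalMap H U hat) (g w : G) :
    hat (hat g * w) = hat (g * w) :=
  hT.hat_eq_of_mul_inv_mem (by simpa [mul_assoc] using H.inv_mem (hT.mul_inv_mem g))

lemma cocycle_mul (hT : IsRightTransversalMap H U hat) (u a b : G) :
    u * (a * b) * (hat (u * (a * b)))⁻¹ =
      u * a * (hat (u * a))⁻¹ * (hat (u * a) * b * (hat (hat (u * a) * b))⁻¹) := by
  rw [hT.hat_hat_mul, ← mul_assoc]; group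

end IsRightTransversalMap

section Schreier

variable {X : Type*}

def schreierSet (U : Set (FreeGroup X)) (hat : FreeGroup X → FreeGroup X) : Set (FreeGroup X) :=
  {g | (∃ u ∈ U, ∃ x : X, g = u * of x * (hat (u * of x))⁻¹) ∧ g ≠ 1}

variable {H : Subgroup (FreeGroup X)} {U : Set (FreeGroup X)} {hat : FreeGroup X → FreeGroup X}

lemma schreierSet_subset (hT : IsRightTransversalMap H U hat) : schreierSet U hat ⊆ H := by
  rintro - ⟨⟨u, -, x, rfl⟩, -⟩
  exact hT.mul_inv_mem _

lemma mul_mul_inv_hat_mem_closure (hT : IsRightTransversalMap H U hat) (w : FreeGroup X) :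
    ∀ u ∈ U, u * w * (hat (u * w))⁻¹ ∈ Subgroup.closure (schreierSet U hat) := by
  induction w using FreeGroup.induction_on with
  | C1 => intro u hu; simp [hT.hat_of_mem hu]
  | of x =>
    intro u hu
    by_cases h : u * of x * (hat (u * of x))⁻¹ = 1
    · simp [h]
    · exact Subgroup.subset_closure ⟨⟨u, hu, x, rfl⟩, h⟩
  | inv_of x ih =>
    intro u hu
    have h := hT.cocycle_mul u (of x)⁻¹ (of x)
    rw [inv_mul_cancel, mul_one, hT.hat_of_mem hu, mul_inv_cancel, eq_comm,
      mul_eq_one_iff_eq_inv] at h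
    rw [h]
    exact inv_mem (ih _ (hT.mem _))
  | mul a b iha ihb =>
    intro u hu
    rw [hT.cocycle_mul]
    exact mul_mem (iha u hu) (ihb _ (hT.mem _))

lemma closure_schreierSet (hT : IsRightTransversalMap H U hat) :
    Subgroup.closure (schreierSet U hat) = H := by
  refine le_antisymm ((Subgroup.closure_le _).2 (schreierSet_subset hT)) fun h hh => ?_
  have key (g : FreeGroup X) : g * (hat g)⁻¹ ∈ Subgroup.closure (schreierSet U hat) := by
    simpa using mul_mul_inv_hat_mem_closure hT ((hat 1)⁻¹ * g) _ (hT.mem 1)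
  have hh1 : hat h = hat 1 := by simpa using hT.hat_mul_left hh 1
  simpa [hh1] using mul_mem (key h) (inv_mem (key 1))

variable [DecidableEq X]

def schreierLetter (hT : IsRightTransversalMap H U hat) (g : FreeGroup X) (x : X) :
    FreeGroup (schreierSet U hat) :=
  if h : hat g * of x * (hat (hat g * of x))⁻¹ = 1 then 1
  else of ⟨_, ⟨hat g, hT.mem g, x, rfl⟩, h⟩

lemma schreierLetter_mul_left (hT : IsRightTransversalMap H U hat) (h : FreeGroup X)
    (hh : h ∈ H) (g : FreeGroup X) (x : X) :
    schreierLetter hT (h * g) x = schreierLetter hT g x := by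
  simp only [schreierLetter, hT.hat_mul_left hh]

lemma schreierLetter_eq_one (hT : IsRightTransversalMap H U hat) {u : FreeGroup X} (hu : u ∈ U)
    (x : X) (hux : u * of x ∈ U) : schreierLetter hT u x = 1 :=
  dif_pos (by rw [hT.hat_of_mem hu, hT.hat_of_mem hux, mul_inv_cancel])

lemma schreierLetter_of_mem (hT : IsRightTransversalMap H U hat) {u : FreeGroup X} (hu : u ∈ U)
    {x : X} (hg : u * of x * (hat (u * of x))⁻¹ ∈ schreierSet U hat) :
    schreierLetter hT u x = of ⟨_, hg⟩ := by
  simp only [schreierLetter, hT.hat_of_mem hu, dif_neg hg.2]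

lemma rewritingHom_schreierLetter (hT : IsRightTransversalMap H U hat)
    (hS : ∀ u ∈ U, ∀ k : ℕ, mk (u.toWord.take k) ∈ U) (s : schreierSet U hat) :
    rewritingHom (schreierLetter_mul_left hT) ⟨s, schreierSet_subset hT s.2⟩ = of s := by
  obtain ⟨g, hg⟩ := s
  obtain ⟨⟨u, hu, x, rfl⟩, -⟩ := id hg
  have traverse {v : FreeGroup X} (hv : v ∈ U) :
      rewriting (schreierLetter hT) v (1, 1) = (v, 1) := by
    simpa [mk_toWord] using
      rewriting_mk_of_forall_take_mem (fun _ => schreierLetter_eq_one hT) (hS v hv) 1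
  have hv := rewriting_inv_apply_of_eq _ (traverse (hT.mem (u * of x)))
  have back : (rewriting (schreierLetter hT) (hat (u * of x))⁻¹ (u * of x, 1)).2 = 1 := by
    simpa [hv] using rewriting_snd_mul_left_of_mem (schreierLetter_mul_left hT)
      (hat (u * of x))⁻¹ (hat (u * of x)) 1 (schreierSet_subset hT hg)
  show (rewriting (schreierLetter hT) (u * of x * (hat (u * of x))⁻¹) (1, 1)).2 = _
  rw [rewriting_mul, rewriting_mul, traverse hu, rewriting_of, schreierLetter_of_mem hT hu hg,
    rewriting_snd_eq_mul, one_mul, back, mul_one]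

theorem exists_freeGroupBasis_schreierSet (hT : IsRightTransversalMap H U hat)
    (hS : ∀ u ∈ U, ∀ k : ℕ, mk (u.toWord.take k) ∈ U) :
    ∃ b : FreeGroupBasis (schreierSet U hat) H, ∀ s, (b s : FreeGroup X) = s := by
  have hrange : (lift (Subtype.val : schreierSet U hat → FreeGroup X)).range = H := by
    rw [range_lift_eq_closure, Subtype.range_coe, closure_schreierSet hT]
  let inc := (lift (Subtype.val : schreierSet U hat → FreeGroup X)).codRestrict H
    fun z => hrange ▸ ⟨z, rfl⟩
  have hinv : Function.LeftInverse (rewritingHom (schreierLetter_mul_left hT)) inc := fun z =>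
    DFunLike.congr_fun (ext_hom ((rewritingHom _).comp inc) (.id _)
      fun s => by simpa [inc] using rewritingHom_schreierLetter hT hS s) z
  have hsurj : Function.Surjective inc := by
    rintro ⟨h, hh⟩
    obtain ⟨z, hz⟩ := hrange ▸ hh
    exact ⟨z, Subtype.ext hz⟩
  exact ⟨.ofRepr (MulEquiv.ofBijective inc ⟨hinv.injective, hsurj⟩).symm, fun _ => lift_apply_of⟩

end Schreier

/-- Nielsen–Schreier: for a subgroup `H` of a free group `F(X)` with right transversal `𝒰`
(with `hat w` the representative of `H w`), the nontrivial elements `u • x • (hat (u x))⁻¹`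
generate `H`; if moreover `𝒰` is a Schreier transversal (closed under taking prefixes of
reduced words), they form a free basis of `H`. -/
theorem nielsen_schreier_transversal {X : Type*} [DecidableEq X] (H : Subgroup (FreeGroup X))
    (U : Set (FreeGroup X)) (hat : FreeGroup X → FreeGroup X)
    (hhatU : ∀ w, hat w ∈ U)
    (hhatH : ∀ w, w * (hat w)⁻¹ ∈ H)
    (huniq : ∀ w, ∀ u ∈ U, w * u⁻¹ ∈ H → u = hat w) :
    (Subgroup.closure {g : FreeGroup X | (∃ u ∈ U, ∃ x : X,
        g = u * FreeGroup.of x * (hat (u * FreeGroup.of x))⁻¹) ∧ g ≠ 1} = H) ∧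
    ((∀ u ∈ U, ∀ k : ℕ, FreeGroup.mk (u.toWord.take k) ∈ U) →
      ∃ b : FreeGroupBasis
          ({g : FreeGroup X | (∃ u ∈ U, ∃ x : X,
            g = u * FreeGroup.of x * (hat (u * FreeGroup.of x))⁻¹) ∧ g ≠ 1}) H,
        ∀ s, (b s : FreeGroup X) = (s : FreeGroup X)) :=
  have hT : IsRightTransversalMap H U hat := ⟨hhatU, hhatH, huniq⟩
  ⟨closure_schreierSet hT, exists_freeGroupBasis_schreierSet hT⟩
end

section
/- Let F = F(X) be the free group on X, n ≥ 3, and ht: F → ℤ the exponent-sum homomorphism. Let G = {w ∈ F : ht(w) ≡ 1 (mod n−1)} and define f(w₁,…,wₙ) = w₁w₂⋯wₙ (the product in F). Then G is closed under f and (G,f) is an n-ary group. -/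
/-!
If `φ : M →* Q` is a group homomorphism and `q ^ n = q`, the fibre `φ⁻¹ {q}` is closed under
`n`-fold products, and with that product it is an `n`-ary group: associativity is inherited from
`M`, and the equation `P * x * R = c` has the unique solution `x = P⁻¹ * c * R⁻¹` in `M`, which
lies in the fibre because `φ P * q * φ R = q ^ n = q`. For the free `n`-ary group, `φ` is the
exponent sum taken modulo `n - 1` and `q` is the class of `1`.
-/

open Multiplicative

theorem map_list_prod_eq_pow_length {M Q : Type*} [Monoid M] [Monoid Q] (φ : M →* Q) {q : Q}
    {l : List M} (h : ∀ w ∈ l, φ w = q) : φ l.prod = q ^ l.length := by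
  rw [map_list_prod, List.prod_eq_pow_card _ q (List.forall_mem_map.2 h), List.length_map]

section NAry

variable {M : Type*} {S : Set M}

theorem isNAryAssoc_of_eq_prod [Monoid M] {n : ℕ} {f : List S → S}
    (hf : ∀ l : List S, l.length = n → (f l : M) = (l.map Subtype.val).prod) :
    IsNAryAssoc n f := by
  intro s i j hs hi hj
  obtain rfl | hn := Nat.eq_zero_or_pos n
  · obtain rfl : i = j := by omega
    rfl
  have insert_eq_prod : ∀ k, k + n ≤ s.length →
      (f (s.take k ++ f ((s.drop k).take n) :: s.drop (k + n)) : M) = (s.map Subtype.val).prod := by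
    intro k hk
    have hinner : ((s.drop k).take n).length = n := by
      simp only [List.length_take, List.length_drop]; omega
    have houter : (s.take k ++ f ((s.drop k).take n) :: s.drop (k + n)).length = n := by
      simp only [List.length_append, List.length_take, List.length_cons, List.length_drop]; omega
    rw [hf _ houter, List.map_append, List.map_cons, List.prod_append, List.prod_cons,
      hf _ hinner]
    simp only [List.map_take, List.map_drop]
    rw [← List.drop_drop, ← List.prod_append, List.take_append_drop, ← List.prod_append,
      List.take_append_drop]
  exact Subtype.ext ((insert_eq_prod i hi).trans (insert_eq_prod j hj).symm)

variable [Group M] {Q : Type*} [Group Q] {q : Q} {n : ℕ}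

theorem list_prod_mem_of_pow_eq_self (φ : M →* Q) (hq : q ^ n = q) (hS : ∀ w, w ∈ S ↔ φ w = q)
    {l : List M} (hl : ∀ w ∈ l, w ∈ S) (hlen : l.length = n) : l.prod ∈ S := by
  rw [hS, map_list_prod_eq_pow_length φ fun w hw => (hS w).1 (hl w hw), hlen, hq]

theorem nAryUniqueSolutions_of_pow_eq_self (φ : M →* Q) (hq : q ^ n = q)
    (hS : ∀ w, w ∈ S ↔ φ w = q)
    {f : List S → S} (hf : ∀ l : List S, l.length = n → (f l : M) = (l.map Subtype.val).prod) :
    NAryUniqueSolutions n f := by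
  intro a i ha hi c
  set P := ((a.take i).map Subtype.val).prod
  set R := ((a.drop (i + 1)).map Subtype.val).prod
  have hval : ∀ x : S, (f (a.take i ++ x :: a.drop (i + 1)) : M) = P * x * R := by
    intro x
    have hlen : (a.take i ++ x :: a.drop (i + 1)).length = n := by
      simp only [List.length_append, List.length_take, List.length_cons, List.length_drop]; omega
    rw [hf _ hlen, List.map_append, List.map_cons, List.prod_append, List.prod_cons, ← mul_assoc]
  have hφ : ∀ l : List S, φ (l.map Subtype.val).prod = q ^ l.length := fun l => by
    rw [map_list_prod_eq_pow_length φ (l := l.map Subtype.val)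
      (List.forall_mem_map.2 fun x _ => (hS x).1 x.2), List.length_map]
  have hPR : φ P * q * φ R = q := by
    rw [hφ, hφ, ← pow_succ, ← pow_add, ← hq]
    congr 1
    simp only [List.length_take, List.length_drop]
    omega
  have hsol : P⁻¹ * c * R⁻¹ ∈ S := by
    rw [hS, map_mul, map_mul, map_inv, map_inv, (hS c).1 c.2]
    calc (φ P)⁻¹ * q * (φ R)⁻¹ = (φ P)⁻¹ * (φ P * q * φ R) * (φ R)⁻¹ := by rw [hPR]
      _ = q := by group
  refine ⟨⟨_, hsol⟩, Subtype.ext ?_, fun y hy => Subtype.ext ?_⟩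
  · rw [hval]
    group
  · show (y : M) = P⁻¹ * c * R⁻¹
    rw [← hy, hval]
    group

end NAry

theorem free_nary_group_general {X : Type*} (n : ℕ)
    (ht : FreeGroup X →* Multiplicative ℤ)
    (Gs : Set (FreeGroup X))
    (hGs : ∀ w : FreeGroup X, w ∈ Gs ↔ ((n : ℤ) - 1) ∣ (Multiplicative.toAdd (ht w) - 1)) :
    (∀ l : List (FreeGroup X), (∀ w ∈ l, w ∈ Gs) → l.length = n → l.prod ∈ Gs) ∧
    (∀ f : List Gs → Gs,
      (∀ l : List Gs, l.length = n → (f l : FreeGroup X) = (l.map Subtype.val).prod) →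
      IsNAryGroup n f) := by
  let H := AddSubgroup.zmultiples ((n : ℤ) - 1)
  let φ := (QuotientAddGroup.mk' H).toMultiplicative.comp ht
  let q : Multiplicative (ℤ ⧸ H) := ofAdd (1 : ℤ)
  have hq : q ^ n = q := by
    rw [← ofAdd_nsmul, ← QuotientAddGroup.mk_nsmul, ofAdd.apply_eq_iff_eq,
      QuotientAddGroup.eq_iff_sub_mem, nsmul_one]
    exact AddSubgroup.mem_zmultiples _
  have hS : ∀ w, w ∈ Gs ↔ φ w = q := fun w => by
    rw [hGs, ← Int.mem_zmultiples_iff, ← QuotientAddGroup.eq_iff_sub_mem]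
    exact ofAdd.apply_eq_iff_eq.symm
  exact ⟨fun l => list_prod_mem_of_pow_eq_self φ hq hS, fun f hf =>
    ⟨isNAryAssoc_of_eq_prod hf, nAryUniqueSolutions_of_pow_eq_self φ hq hS hf⟩⟩

/-- The free `n`-ary group: `G = {w ∈ F(X) : ht w ≡ 1 mod (n-1)}` is closed under the
`n`-fold product in `F(X)`, and with this operation it is an `n`-ary group. -/
theorem free_nary_group {X : Type*} (n : ℕ) (hn : 3 ≤ n)
    (ht : FreeGroup X →* Multiplicative ℤ)
    (hht : ∀ x : X, ht (FreeGroup.of x) = Multiplicative.ofAdd 1)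
    (Gs : Set (FreeGroup X))
    (hGs : ∀ w : FreeGroup X, w ∈ Gs ↔ ((n : ℤ) - 1) ∣ (Multiplicative.toAdd (ht w) - 1)) :
    (∀ l : List (FreeGroup X), (∀ w ∈ l, w ∈ Gs) → l.length = n → l.prod ∈ Gs) ∧
    (∀ f : List Gs → Gs,
      (∀ l : List Gs, l.length = n → (f l : FreeGroup X) = (l.map Subtype.val).prod) →
      IsNAryGroup n f) :=
  free_nary_group_general n ht Gs hGs
end

section
/- Let F = F(X) be a free group of finite rank s ≥ 2, n ≥ 3, ht: F → ℤ the exponent-sum homomorphism, and G = {w ∈ F : ht(w) ≡ 1 (mod n−1)} with the n-ary operation given by the product in F. Then any retract group of (G,f) is a free group of rank (s−1)(n−1)+1. -/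
/-!
Write `F = F(t, x₁, …, x_{s-1})` (with `t = of none`) and `m = n - 1`. Since `a ^ (n - 2)` has
exponent sum `≡ -1 (mod m)`, left translation by it maps `G` onto the subgroup `H` of words whose
exponent sum is divisible by `m`, and turns `x a^(n-2) y` into the product of the translates of `x`
and `y`. By Reidemeister–Schreier with the transversal `1, t, …, t^(m-1)`, `H` is free on `t^m`
and the `t^k xᵢ t^-(k+1)`, that is on `(s - 1) m + 1` generators. The rewriting process is a
homomorphism from `F` into the wreath product of that free group with `ℤ/m`, whose `k`-th
coordinate rewrites `t^k w`; substituting the generators back inverts it on `H`.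
-/

namespace ZMod

variable {m : ℕ} [NeZero m]

lemma val_neg_one_of_neZero : (-1 : ZMod m).val = m - 1 := by
  obtain ⟨m, rfl⟩ := Nat.exists_eq_succ_of_ne_zero (NeZero.ne m)
  exact val_neg_one m

lemma val_add_one_of_ne_neg_one {k : ZMod m} (hk : k ≠ -1) : (k + 1).val = k.val + 1 := by
  have hk1 : k + 1 = ((k.val + 1 : ℕ) : ZMod m) := by
    rw [Nat.cast_add_one, natCast_zmod_val]
  have hlt : k.val + 1 < m := by
    refine lt_of_le_of_ne k.val_lt fun h => hk ?_
    rw [eq_neg_iff_add_eq_zero, hk1, h, natCast_self]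
  rw [hk1, val_natCast, Nat.mod_eq_of_lt hlt]

end ZMod

lemma pow_pred_mul_eq_one_iff {G : Type*} [Group G] {g x : G} {m : ℕ} (hm : m ≠ 0)
    (hg : g ^ m = 1) : g ^ (m - 1) * x = 1 ↔ x = g := by
  have hg' : g ^ (m - 1) * g = 1 := by
    rwa [← pow_succ, Nat.sub_add_cancel (Nat.one_le_iff_ne_zero.mpr hm)]
  exact ⟨fun h => mul_left_cancel (h.trans hg'.symm), fun h => h ▸ hg'⟩

namespace FreeGroup

variable (α : Type*) (m : ℕ)

def expSumMod : FreeGroup α →* Multiplicative (ZMod m) :=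
  lift fun _ => Multiplicative.ofAdd 1

variable {α}

@[simp]
lemma expSumMod_of (x : α) : expSumMod α m (of x) = Multiplicative.ofAdd 1 := lift_apply_of

lemma expSumMod_pow_of (x : α) (j : ℕ) :
    expSumMod α m (of x ^ j) = Multiplicative.ofAdd (j : ZMod m) := by
  simp [← ofAdd_nsmul]

end FreeGroup

namespace CyclicCover

open FreeGroup (of lift lift_apply_of expSumMod expSumMod_of expSumMod_pow_of)

variable {ι : Type*} (m : ℕ)

abbrev Gen (ι : Type*) (m : ℕ) := Option (ZMod m × ι)

def shift : Multiplicative (ZMod m) →* MulAut (ZMod m → FreeGroup (Gen ι m)) where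
  toFun i :=
    { toFun := fun f k => f (k + i.toAdd)
      invFun := fun f k => f (k - i.toAdd)
      left_inv := fun f => by simp
      right_inv := fun f => by simp
      map_mul' := fun _ _ => rfl }
  map_one' := by ext; simp
  map_mul' := fun _ _ => by ext; simp [add_assoc]

abbrev Wreath (ι : Type*) (m : ℕ) :=
  (ZMod m → FreeGroup (Gen ι m)) ⋊[shift m] Multiplicative (ZMod m)

lemma mul_left_apply (p q : Wreath ι m) (k : ZMod m) :
    (p * q).left k = p.left k * q.left (k + p.right.toAdd) := rfl

lemma inv_left_apply (p : Wreath ι m) (k : ZMod m) :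
    p⁻¹.left k = (p.left (k - p.right.toAdd))⁻¹ := by
  simp [shift, sub_eq_add_neg]

/-- Reading a letter from the coset `t^k` crosses the Schreier generator `t^k x t^-(k+1)`, or, for
`t` itself, crosses `t^m` when `k = -1` and nothing otherwise. -/
def embedGen : Option ι → Wreath ι m
  | none => ⟨fun k => if k = -1 then of none else 1, .ofAdd 1⟩
  | some x => ⟨fun k => of (some (k, x)), .ofAdd 1⟩

def embed : FreeGroup (Option ι) →* Wreath ι m := lift (embedGen m)

@[simp]
lemma embed_of (x : Option ι) : embed m (of x) = embedGen m x := lift_apply_of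

lemma embed_right (w : FreeGroup (Option ι)) : (embed m w).right = expSumMod _ m w := by
  rw [← SemidirectProduct.rightHom_eq_right, ← MonoidHom.comp_apply]
  congr 1
  ext (_ | _) <;> rfl

def transversal (k : ZMod m) : FreeGroup (Option ι) := of none ^ k.val

def baseWord : Gen ι m → FreeGroup (Option ι)
  | none => of none ^ m
  | some (k, x) => transversal m k * of (some x) * (transversal m (k + 1))⁻¹

def toBase : FreeGroup (Gen ι m) →* FreeGroup (Option ι) := lift (baseWord m)

@[simp]
lemma toBase_of (y : Gen ι m) : toBase m (of y) = baseWord m y := lift_apply_of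

variable {m} [NeZero m]

lemma transversal_mul_of_none (k : ZMod m) :
    transversal m k * of none =
      toBase m ((embedGen m none).left k) * transversal (ι := ι) m (k + 1) := by
  by_cases hk : k = -1
  · subst hk
    simp only [embedGen, if_true, neg_add_cancel, transversal, ZMod.val_zero, pow_zero, mul_one,
      ZMod.val_neg_one_of_neZero, toBase_of, baseWord]
    rw [← pow_succ, Nat.sub_add_cancel NeZero.one_le]
  · simp [embedGen, hk, transversal, ZMod.val_add_one_of_ne_neg_one hk, pow_succ]

lemma toBase_embed_left (w : FreeGroup (Option ι)) (k : ZMod m) :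
    toBase m ((embed m w).left k) =
      transversal m k * w * (transversal m (k + (expSumMod _ m w).toAdd))⁻¹ := by
  induction w using FreeGroup.induction_on generalizing k with
  | C1 => simp
  | of x =>
    obtain _ | x := x
    · rw [transversal_mul_of_none]
      simp
    · simp [embedGen, baseWord]
  | inv_of x ih =>
    rw [map_inv, inv_left_apply, map_inv, ih, embed_right, map_inv, toAdd_inv, sub_add_cancel,
      ← sub_eq_add_neg]
    group
  | mul u v ihu ihv =>
    rw [map_mul, mul_left_apply, map_mul, ihu, ihv, embed_right, map_mul, toAdd_mul, add_assoc]
    group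

lemma toBase_embed_left_zero {w : FreeGroup (Option ι)} (hw : expSumMod _ m w = 1) :
    toBase m ((embed m w).left 0) = w := by
  simpa [hw, transversal] using toBase_embed_left w (0 : ZMod m)

lemma embed_pow_of_none_left_zero {j : ℕ} (hj : j < m) :
    (embed m (of none ^ j : FreeGroup (Option ι))).left 0 = 1 := by
  induction j with
  | zero => rfl
  | succ j ih =>
    have hj' : (j : ZMod m) ≠ -1 := fun h => by
      have := congrArg ZMod.val h
      rw [ZMod.val_natCast_of_lt (by omega), ZMod.val_neg_one_of_neZero] at this
      omega
    rw [pow_succ, map_mul, mul_left_apply, ih (by omega), embed_right, expSumMod_pow_of]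
    simp [embedGen, hj']

lemma embed_transversal_left_zero (k : ZMod m) :
    (embed m (transversal (ι := ι) m k)).left 0 = 1 :=
  embed_pow_of_none_left_zero k.val_lt

lemma expSumMod_transversal (k : ZMod m) :
    expSumMod _ m (transversal (ι := ι) m k) = .ofAdd k := by
  rw [transversal, expSumMod_pow_of, ZMod.natCast_zmod_val]

lemma pow_of_none_eq_transversal_mul :
    (of none ^ m : FreeGroup (Option ι)) = transversal m (-1) * of none := by
  rw [transversal, ← pow_succ, ZMod.val_neg_one_of_neZero, Nat.sub_add_cancel NeZero.one_le]

lemma embed_baseWord_left_zero (y : Gen ι m) : (embed m (baseWord m y)).left 0 = of y := by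
  obtain _ | ⟨k, x⟩ := y
  · rw [baseWord, pow_of_none_eq_transversal_mul, map_mul, mul_left_apply,
      embed_transversal_left_zero, embed_right, expSumMod_transversal]
    simp [embedGen]
  · simp only [baseWord, map_mul, map_inv, mul_left_apply, inv_left_apply,
      SemidirectProduct.mul_right, embed_right, expSumMod_transversal, expSumMod_of]
    simp [embedGen, embed_transversal_left_zero]

lemma expSumMod_comp_toBase : (expSumMod _ m).comp (toBase (ι := ι) m) = 1 := by
  refine FreeGroup.ext_hom _ _ fun y => ?_
  obtain _ | ⟨k, x⟩ := y
  · simp [baseWord, expSumMod_pow_of]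
  · simp [baseWord, expSumMod_transversal, ← ofAdd_add, ← ofAdd_neg]

lemma expSumMod_toBase (h : FreeGroup (Gen ι m)) : expSumMod _ m (toBase m h) = 1 :=
  DFunLike.congr_fun expSumMod_comp_toBase h

lemma embed_toBase_left_zero (h : FreeGroup (Gen ι m)) : (embed m (toBase m h)).left 0 = h := by
  induction h using FreeGroup.induction_on with
  | C1 => simp
  | of y => rw [toBase_of, embed_baseWord_left_zero]
  | inv_of y ih =>
    rw [map_inv, map_inv, inv_left_apply, embed_right, expSumMod_toBase]
    simpa using ih
  | mul u v ihu ihv =>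
    rw [map_mul, map_mul, mul_left_apply, embed_right, expSumMod_toBase]
    simpa using congrArg₂ (· * ·) ihu ihv

def kerEquiv : (expSumMod (Option ι) m).ker ≃* FreeGroup (Gen ι m) where
  toFun w := (embed m w).left 0
  invFun h := ⟨toBase m h, expSumMod_toBase h⟩
  left_inv w := Subtype.ext (toBase_embed_left_zero w.2)
  right_inv := embed_toBase_left_zero
  map_mul' u v := by
    simp only [Subgroup.coe_mul, map_mul, mul_left_apply, embed_right, MonoidHom.mem_ker.mp u.2]
    simp

end CyclicCover

lemma exists_bijective_map_star_of_mem_iff {F K : Type*} [Group F] [Group K] {H : Subgroup F}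
    {Gs : Set F} {c : F} (hGs : ∀ w, w ∈ Gs ↔ c * w ∈ H) (e : H ≃* K) (star : Gs → Gs → Gs)
    (hstar : ∀ x y, (star x y : F) = x * c * y) :
    ∃ φ : Gs → K, Function.Bijective φ ∧ ∀ x y, φ (star x y) = φ x * φ y := by
  let translate : Gs ≃ H :=
    { toFun x := ⟨c * x, (hGs x).mp x.2⟩
      invFun h := ⟨c⁻¹ * h, (hGs _).mpr (by simp)⟩
      left_inv x := by simp
      right_inv h := by simp }
  refine ⟨e ∘ translate, e.bijective.comp translate.bijective, fun x y => ?_⟩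
  simp only [Function.comp_apply, ← map_mul]
  congr 1
  ext
  simp [translate, hstar, mul_assoc]

/-- The retract of the free `n`-ary group of rank `s` is a free group of
rank `(s-1)(n-1) + 1`. -/
theorem retract_of_free_nary_is_free (s : ℕ) (hs : 2 ≤ s) (n : ℕ) (hn : 3 ≤ n)
    (ht : FreeGroup (Fin s) →* Multiplicative ℤ)
    (hht : ∀ x : Fin s, ht (FreeGroup.of x) = Multiplicative.ofAdd 1)
    (Gs : Set (FreeGroup (Fin s)))
    (hGs : ∀ w : FreeGroup (Fin s),
      w ∈ Gs ↔ ((n : ℤ) - 1) ∣ (Multiplicative.toAdd (ht w) - 1))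
    (a : Gs) (star : Gs → Gs → Gs)
    (hstar : ∀ x y : Gs,
      (star x y : FreeGroup (Fin s)) = (x : FreeGroup (Fin s)) *
        ((a : FreeGroup (Fin s)) ^ (n - 2)) * (y : FreeGroup (Fin s))) :
    ∃ φ : Gs → FreeGroup (Fin ((s - 1) * (n - 1) + 1)),
      Function.Bijective φ ∧ ∀ x y : Gs, φ (star x y) = φ x * φ y := by
  set m := n - 1
  have : NeZero m := ⟨by omega⟩
  let Φ : FreeGroup (Fin s) ≃* FreeGroup (Option (Fin (s - 1))) :=
    FreeGroup.freeGroupCongr ((finCongr (by omega)).trans (finSuccEquiv (s - 1)))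
  let χ := (FreeGroup.expSumMod _ m).comp Φ.toMonoidHom
  have hχ : χ = (Int.castAddHom (ZMod m)).toMultiplicative.comp ht :=
    FreeGroup.ext_hom _ _ fun x => by simp [χ, Φ, hht]
  have mem_Gs_iff : ∀ w, w ∈ Gs ↔ χ w = .ofAdd 1 := fun w => by
    rw [hGs, hχ, show (n : ℤ) - 1 = (m : ℕ) by omega, ← ZMod.intCast_eq_intCast_iff_dvd_sub]
    simp [eq_comm]
  have hχa : χ a = .ofAdd 1 := (mem_Gs_iff a).mp a.2
  have hχa_pow : χ a ^ m = 1 := by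
    rw [hχa, ← ofAdd_nsmul, nsmul_one, ZMod.natCast_self]
    rfl
  have mem_Gs_iff_translate_mem :
      ∀ w, w ∈ Gs ↔ (a : FreeGroup (Fin s)) ^ (n - 2) * w ∈ χ.ker := fun w => by
    rw [MonoidHom.mem_ker, map_mul, map_pow, show n - 2 = m - 1 by omega,
      pow_pred_mul_eq_one_iff (NeZero.ne m) hχa_pow, hχa, mem_Gs_iff]
  have hcard : Fintype.card (CyclicCover.Gen (Fin (s - 1)) m) = (s - 1) * (n - 1) + 1 := by
    simp [CyclicCover.Gen, ZMod.card, m, mul_comm]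
  let kerEquiv : χ.ker ≃* FreeGroup (Fin ((s - 1) * (n - 1) + 1)) :=
    ((MulEquiv.subgroupCongr (MonoidHom.ker_comp_mulEquiv _ Φ)).trans
      (Φ.symm.subgroupMap _).symm).trans <|
        CyclicCover.kerEquiv.trans (FreeGroup.freeGroupCongr (Fintype.equivFinOfCardEq hcard))
  exact exists_bijective_map_star_of_mem_iff mem_Gs_iff_translate_mem kerEquiv star hstar
end

section
/- Let (G,f) = der_{θ,b}(G,·) be an n-ary group (n ≥ 3) that is a free n-ary group of rank s > 1. Then the group (G,·) is a free group of rank k = (s−1)(n−1)+1. -/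
/-!
The `n`-ary product of `x, θ⁻¹(b⁻¹), 1, …, 1, y` is `x * y`, so the isomorphism `β` of `G` onto
the words of height `≡ 1 mod (n - 1)` in `F = F(x₁, …, xₛ)` satisfies `β (x * y) = β x * c * β y`
for a fixed `c`. Hence `z ↦ β z * c` embeds `(G, ·)` onto the subgroup `K` of words of height
divisible by `n - 1`.

After the Nielsen change of basis `xᵢ ↦ xᵢ x₁⁻¹` (`i ≥ 2`), `F ≅ F(ℤ × Y) ⋊ ℤ` with `|Y| = s - 1`,
the generator `t = x₁` of `ℤ` shifting the `ℤ`-coordinate, and the height becomes the `ℤ`-component.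
So `K ≅ F(ℤ × Y) ⋊ (n - 1)ℤ`, which is free on `t ^ (n - 1)` and the `(r, y)` with `0 ≤ r < n - 1`:
`(s - 1)(n - 1) + 1` generators.
-/

/-- `(G, f)` is a free `n`-ary group of rank `s`: it is isomorphic (as an `n`-ary group) to
`{w ∈ F(X) : ht w ≡ 1 mod (n-1)}` with the `n`-fold product, where `|X| = s` and `ht` is the
exponent-sum homomorphism. -/
def IsFreeNAryGroupOfRank {G : Type*} (n s : ℕ) (f : List G → G) : Prop :=
  ∃ ht : FreeGroup (Fin s) →* Multiplicative ℤ,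
    (∀ x : Fin s, ht (FreeGroup.of x) = Multiplicative.ofAdd 1) ∧
    ∃ β : G ≃ {w : FreeGroup (Fin s) // ((n : ℤ) - 1) ∣ (Multiplicative.toAdd (ht w) - 1)},
      ∀ l : List G, l.length = n →
        (β (f l) : FreeGroup (Fin s)) =
          (l.map fun x => (β x : FreeGroup (Fin s))).prod

open FreeGroup SemidirectProduct Multiplicative
open scoped Fin.IntCast

def MonoidHom.dvdSubgroup {H : Type*} [Group H] (φ : H →* Multiplicative ℤ) (m : ℤ) : Subgroup H :=
  (AddSubgroup.zmultiples m).toSubgroup.comap φ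

@[simp] lemma MonoidHom.mem_dvdSubgroup {H : Type*} [Group H] (φ : H →* Multiplicative ℤ) (m : ℤ)
    (x : H) : x ∈ φ.dvdSubgroup m ↔ m ∣ (φ x).toAdd := by
  simp [dvdSubgroup, Int.mem_zmultiples_iff]

def MulEquiv.dvdSubgroupCongr {H H' : Type*} [Group H] [Group H'] (E : H ≃* H')
    {φ : H →* Multiplicative ℤ} {φ' : H' →* Multiplicative ℤ} (h : ∀ x, φ' (E x) = φ x) (m : ℤ) :
    φ.dvdSubgroup m ≃* φ'.dvdSubgroup m :=
  (E.subgroupMap _).trans <| MulEquiv.subgroupCongr <| by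
    ext y
    simp [Subgroup.map_equiv_eq_comap_symm, ← h]

lemma Fin.intCast_add_mul_self {m : ℕ} [NeZero m] (j k : ℤ) :
    ((j + m * k : ℤ) : Fin m) = (j : Fin m) := by
  ext; simp [Int.add_mul_emod_self_left]

lemma Fin.natCast_val_intCast {m : ℕ} [NeZero m] (j : ℤ) : (((j : Fin m) : ℕ) : ℤ) = j % m := by
  simp [Int.emod_nonneg j (Int.natCast_ne_zero.2 (NeZero.ne m))]

lemma Fin.intCast_val_eq_self {m : ℕ} [NeZero m] (r : Fin m) : (((r : ℕ) : ℤ) : Fin m) = r := by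
  ext; simp [Int.emod_eq_of_lt (Int.natCast_nonneg _) (Int.ofNat_lt.2 r.2)]

def FreeGroup.shear (K : Type*) : FreeGroup (Option K) ≃* FreeGroup (Option K) :=
  MonoidHom.toMulEquiv
    (FreeGroup.lift fun | none => of none | some j => of (some j) * of none)
    (FreeGroup.lift fun | none => of none | some j => of (some j) * (of none)⁻¹)
    (by apply FreeGroup.ext_hom; rintro (_ | j) <;> simp)
    (by apply FreeGroup.ext_hom; rintro (_ | j) <;> simp)

@[simp] lemma FreeGroup.shear_of_none (K : Type*) : shear K (of none) = of none := by
  simp [shear]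

@[simp] lemma FreeGroup.shear_of_some (K : Type*) (j : K) :
    shear K (of (some j)) = of (some j) * of none := by
  simp [shear]

def shiftAut (I : Type*) (m : ℕ) : Multiplicative ℤ →* MulAut (FreeGroup (ℤ × I)) :=
  MonoidHom.mk' (fun k => freeGroupCongr ((Equiv.addRight (m * k.toAdd)).prodCongr (Equiv.refl I)))
    fun a b => by
      apply MulEquiv.toMonoidHom_injective
      ext ⟨j, i⟩
      simp only [MulEquiv.coe_toMonoidHom, freeGroupCongr_apply, Equiv.prodCongr_apply,
        Equiv.coe_addRight, Equiv.coe_refl, MulAut.mul_apply, map.of, toAdd_mul, Prod.map]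
      congr 2
      ring

@[simp] lemma shiftAut_of {I : Type*} (m : ℕ) (k : Multiplicative ℤ) (j : ℤ) (i : I) :
    shiftAut I m k (of (j, i)) = of (j + m * k.toAdd, i) := by
  simp [shiftAut]

abbrev ShiftSemidirect (I : Type*) (m : ℕ) := FreeGroup (ℤ × I) ⋊[shiftAut I m] Multiplicative ℤ

namespace ShiftSemidirect

variable {I : Type*} {m : ℕ}

lemma inr_mul_inl_mul_inr_inv (k : ℤ) (j : ℤ) (i : I) :
    (inr (ofAdd k) * inl (of (j, i)) * (inr (ofAdd k))⁻¹ : ShiftSemidirect I m) =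
      inl (of (j + m * k, i)) := by
  rw [← _root_.map_inv, ← inl_aut, shiftAut_of, toAdd_ofAdd]

variable (I m) in
def ofFreeGroup : FreeGroup (Option (Fin m × I)) →* ShiftSemidirect I m :=
  FreeGroup.lift fun
    | none => inr (ofAdd 1)
    | some (r, i) => inl (of ((r : ℤ), i))

@[simp] lemma ofFreeGroup_of_none : ofFreeGroup I m (of none) = inr (ofAdd 1) := lift_apply_of

@[simp] lemma ofFreeGroup_of_some (r : Fin m) (i : I) :
    ofFreeGroup I m (of (some (r, i))) = inl (of ((r : ℤ), i)) := lift_apply_of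

@[simp] lemma ofFreeGroup_of_none_zpow (k : ℤ) :
    ofFreeGroup I m (of none ^ k) = inr (ofAdd k) := by
  rw [map_zpow, ofFreeGroup_of_none, ← map_zpow, ← ofAdd_zsmul, smul_eq_mul, mul_one]

section

variable [NeZero m]

variable (I m) in
/-- Writing `j = q m + r`, the generator `(j, i)` is the `t^q`-conjugate of `(r, i)`. -/
def toFreeGroupLeft : FreeGroup (ℤ × I) →* FreeGroup (Option (Fin m × I)) :=
  FreeGroup.lift fun ⟨j, i⟩ =>
    of none ^ (j / m) * of (some ((j : Fin m), i)) * (of none ^ (j / m))⁻¹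

variable (I m) in
def toFreeGroup : ShiftSemidirect I m →* FreeGroup (Option (Fin m × I)) :=
  SemidirectProduct.lift (toFreeGroupLeft I m) (zpowersHom _ (of none)) fun k => by
    apply FreeGroup.ext_hom
    rintro ⟨j, i⟩
    simp only [toFreeGroupLeft, MonoidHom.comp_apply, MulEquiv.coe_toMonoidHom, shiftAut_of,
      lift_apply_of, MulAut.conj_apply, zpowersHom_apply,
      Int.add_mul_ediv_left _ _ (Int.natCast_ne_zero.2 (NeZero.ne m)), Fin.intCast_add_mul_self]
    group

@[simp] lemma toFreeGroup_inl_of (j : ℤ) (i : I) :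
    toFreeGroup I m (inl (of (j, i))) =
      of none ^ (j / m) * of (some ((j : Fin m), i)) * (of none ^ (j / m))⁻¹ := by
  simp [toFreeGroup, toFreeGroupLeft]

@[simp] lemma toFreeGroup_inr (k : Multiplicative ℤ) :
    toFreeGroup I m (inr k) = of none ^ k.toAdd := by
  simp [toFreeGroup]

variable (I m) in
def freeGroupEquiv : FreeGroup (Option (Fin m × I)) ≃* ShiftSemidirect I m :=
  MonoidHom.toMulEquiv (ofFreeGroup I m) (toFreeGroup I m)
    (by
      apply FreeGroup.ext_hom
      rintro (_ | ⟨r, i⟩)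
      · simp
      · have hr : (r : ℤ) / m = 0 := Int.ediv_eq_zero_of_lt (by positivity) (by exact_mod_cast r.2)
        simp [hr, Fin.intCast_val_eq_self])
    (by
      apply SemidirectProduct.hom_ext
      · apply FreeGroup.ext_hom
        rintro ⟨j, i⟩
        simp only [MonoidHom.comp_apply, toFreeGroup_inl_of, _root_.map_mul, _root_.map_inv,
          ofFreeGroup_of_none_zpow, ofFreeGroup_of_some, Fin.natCast_val_intCast,
          MonoidHom.id_apply, inr_mul_inl_mul_inr_inv, Int.emod_add_mul_ediv]
      · apply MonoidHom.ext_mint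
        simp)

end

variable (I m) in
def scale : ShiftSemidirect I m →* ShiftSemidirect I 1 :=
  SemidirectProduct.map (MonoidHom.id _) (zpowersHom _ (ofAdd (m : ℤ))) fun k => by
    apply FreeGroup.ext_hom
    rintro ⟨j, i⟩
    simp only [MonoidHom.comp_apply, MulEquiv.coe_toMonoidHom, MonoidHom.id_apply, shiftAut_of,
      zpowersHom_apply, toAdd_zpow, toAdd_ofAdd, smul_eq_mul, Nat.cast_one, one_mul, mul_comm]

@[simp] lemma toAdd_scale_right (x : ShiftSemidirect I m) :
    (scale I m x).right.toAdd = m * x.right.toAdd := by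
  simp [scale, SemidirectProduct.map_right, mul_comm]

lemma scale_injective [NeZero m] : Function.Injective (scale I m) := by
  intro x y h
  have hright := congrArg (fun z => (z.right).toAdd) h
  simp only [toAdd_scale_right] at hright
  exact SemidirectProduct.ext (congrArg SemidirectProduct.left h :)
    (toAdd.injective (mul_left_cancel₀ (Int.natCast_ne_zero.2 (NeZero.ne m)) hright))

lemma range_scale :
    (scale I m).range = (rightHom : ShiftSemidirect I 1 →* _).dvdSubgroup m := by
  ext x
  simp only [MonoidHom.mem_range, MonoidHom.mem_dvdSubgroup, rightHom_eq_right]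
  constructor
  · rintro ⟨y, rfl⟩
    exact ⟨y.right.toAdd, toAdd_scale_right y⟩
  · rintro ⟨k, hk⟩
    exact ⟨⟨x.left, ofAdd k⟩, SemidirectProduct.ext rfl (toAdd.injective (by simp [hk]))⟩

variable (I m) in
noncomputable def dvdSubgroupEquiv [NeZero m] :
    (rightHom : ShiftSemidirect I 1 →* _).dvdSubgroup m ≃* ShiftSemidirect I m :=
  ((MonoidHom.ofInjective scale_injective).trans (MulEquiv.subgroupCongr range_scale)).symm

lemma exists_equiv_rightHom_eq {X : Type*} (e : X ≃ Option (Fin 1 × I))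
    (ht : FreeGroup X →* Multiplicative ℤ) (hht : ∀ x, ht (of x) = ofAdd 1) :
    ∃ E : FreeGroup X ≃* ShiftSemidirect I 1, ∀ w, rightHom (E w) = ht w := by
  let E := (freeGroupCongr e).trans ((shear _).trans (freeGroupEquiv I 1))
  refine ⟨E, fun w => DFunLike.congr_fun (?_ : rightHom.comp E.toMonoidHom = ht) w⟩
  apply FreeGroup.ext_hom
  intro x
  rcases hx : e x with _ | ⟨r, i⟩ <;> simp [E, freeGroupEquiv, hx, hht]

end ShiftSemidirect

section Translate

variable {G H : Type*} [Group G] [Group H] {φ : H →* Multiplicative ℤ} {m : ℤ}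
  (β : G ≃ {w : H // m ∣ (φ w).toAdd - 1}) {c : H} (hβ : ∀ x y, (β (x * y) : H) = β x * c * β y)

def translateHom : G →* H :=
  MonoidHom.mk' (fun z => β z * c) fun x y => by simp only [hβ, mul_assoc]

lemma translateHom_injective : Function.Injective (translateHom β hβ) :=
  fun _ _ h => β.injective (Subtype.ext (mul_right_cancel h))

lemma range_translateHom : (translateHom β hβ).range = φ.dvdSubgroup m := by
  have hc : c = (β 1 : H)⁻¹ := by
    have h := hβ 1 1
    rw [mul_one, mul_assoc, left_eq_mul] at h
    exact eq_inv_of_mul_eq_one_left h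
  ext w
  simp only [MonoidHom.mem_range, MonoidHom.mem_dvdSubgroup]
  constructor
  · rintro ⟨z, rfl⟩
    have h := dvd_sub (β z).2 (β 1).2
    simpa [translateHom, hc, sub_eq_add_neg] using h
  · intro hw
    have hw' : m ∣ (φ (w * c⁻¹)).toAdd - 1 := by
      have h := dvd_add hw (β 1).2
      simpa [hc, add_sub_assoc] using h
    exact ⟨β.symm ⟨_, hw'⟩, by simp [translateHom]⟩

noncomputable def translateMulEquiv : G ≃* φ.dvdSubgroup m :=
  (MonoidHom.ofInjective (translateHom_injective β hβ)).trans
    (MulEquiv.subgroupCongr (range_translateHom β hβ))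

end Translate

def derOp {G : Type*} [Group G] (θ : G ≃* G) (b : G) (l : List G) : G :=
  (l.mapIdx fun i x => (⇑θ)^[i] x).prod * b

lemma derOp_eq_mul {G : Type*} [Group G] {n : ℕ} (hn : 3 ≤ n) (θ : G ≃* G) (b : G)
    (hconj : ∀ x : G, (⇑θ)^[n - 1] x = b * x * b⁻¹) (x y : G) :
    derOp θ b (x :: θ.symm b⁻¹ :: (List.replicate (n - 3) 1 ++ [y])) = x * y := by
  have hpad : ((List.replicate (n - 3) (1 : G)).mapIdx fun i z => (⇑θ)^[i + 2] z).prod = 1 := by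
    simp [List.mapIdx_eq_ofFn, Function.iterate_fixed (_root_.map_one θ)]
  simp only [derOp, List.mapIdx_cons, List.mapIdx_append, List.prod_cons, List.prod_append, hpad]
  simp [show n - 3 + 2 = n - 1 by omega, hconj, mul_assoc]

lemma IsFreeNAryGroupOfRank.exists_mulEquiv_dvdSubgroup {G : Type*} [Group G] {n s : ℕ} (hn : 3 ≤ n)
    {θ : G ≃* G} {b : G} (hconj : ∀ x : G, (⇑θ)^[n - 1] x = b * x * b⁻¹)
    (hfree : IsFreeNAryGroupOfRank n s (derOp θ b)) :
    ∃ ht : FreeGroup (Fin s) →* Multiplicative ℤ, (∀ x, ht (of x) = ofAdd 1) ∧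
      Nonempty (G ≃* ht.dvdSubgroup (n - 1 : ℕ)) := by
  obtain ⟨ht, hht, β, hβ⟩ := hfree
  have hmul (x y : G) : (β (x * y) : FreeGroup (Fin s)) =
      β x * (β (θ.symm b⁻¹) * (β 1 : FreeGroup (Fin s)) ^ (n - 3)) * β y := by
    have hlen : (x :: θ.symm b⁻¹ :: (List.replicate (n - 3) 1 ++ [y])).length = n := by
      simp only [List.length_cons, List.length_append, List.length_replicate, List.length_nil]
      omega
    rw [← derOp_eq_mul hn θ b hconj, hβ _ hlen]
    simp [mul_assoc]
  refine ⟨ht, hht, ⟨?_⟩⟩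
  rw [Nat.cast_sub (by omega), Nat.cast_one]
  exact translateMulEquiv β hmul

theorem base_group_of_free_nary_is_free_general {G : Type*} [Group G] (n : ℕ) (hn : 3 ≤ n)
    (s : ℕ) (hs : 1 < s) (θ : G ≃* G) (b : G)
    (hconj : ∀ x : G, (⇑θ)^[n - 1] x = b * x * b⁻¹)
    (hfree : IsFreeNAryGroupOfRank n s
      (fun l : List G => (l.mapIdx fun i x => (⇑θ)^[i] x).prod * b)) :
    Nonempty (FreeGroupBasis (Fin ((s - 1) * (n - 1) + 1)) G) := by
  obtain ⟨ht, hht, ⟨eG⟩⟩ := IsFreeNAryGroupOfRank.exists_mulEquiv_dvdSubgroup hn hconj hfree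
  have hcard : Fintype.card (Fin s) = Fintype.card (Option (Fin 1 × Fin (s - 1))) := by
    simp only [Fintype.card_option, Fintype.card_prod, Fintype.card_fin]
    omega
  obtain ⟨E, hE⟩ := ShiftSemidirect.exists_equiv_rightHom_eq (Fintype.equivOfCardEq hcard) ht hht
  have : NeZero (n - 1) := ⟨by omega⟩
  let eF : G ≃* FreeGroup (Option (Fin (n - 1) × Fin (s - 1))) :=
    eG.trans <| (E.dvdSubgroupCongr hE _).trans <|
      (ShiftSemidirect.dvdSubgroupEquiv _ (n - 1)).trans (ShiftSemidirect.freeGroupEquiv _ _).symm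
  exact ⟨.ofRepr <| eF.trans <| freeGroupCongr <| Fintype.equivOfCardEq <| by simp [mul_comm]⟩

/-- If `(G, f) = der_{θ,b}(G, ·)` is a free `n`-ary group of rank `s > 1`, then `(G, ·)`
is a free group of rank `(s-1)(n-1) + 1`. -/
theorem base_group_of_free_nary_is_free {G : Type*} [Group G] (n : ℕ) (hn : 3 ≤ n)
    (s : ℕ) (hs : 1 < s) (θ : G ≃* G) (b : G) (hθb : θ b = b)
    (hconj : ∀ x : G, (⇑θ)^[n - 1] x = b * x * b⁻¹)
    (hfree : IsFreeNAryGroupOfRank n s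
      (fun l : List G => (l.mapIdx fun i x => (⇑θ)^[i] x).prod * b)) :
    Nonempty (FreeGroupBasis (Fin ((s - 1) * (n - 1) + 1)) G) :=
  base_group_of_free_nary_is_free_general n hn s hs θ b hconj hfree
end

section
/- Let (G,·) be a free group, n ≥ 3, θ an automorphism of (G,·), and b ∈ G with θ(b) = b and θ^{n-1}(x) = bxb⁻¹ for all x. Suppose there exist v₁,…,v_{s-1} ∈ G (s > 1) such that { b } ∪ { θʲ(vᵢ) : 1 ≤ i ≤ s−1, 0 ≤ j ≤ n−2 } is a free basis of (G,·). Then the n-ary group (G,f) with f(x₁,…,xₙ) = x₁θ(x₂)⋯θ^{n-1}(xₙ)b is a free n-ary group of rank s. -/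
/-!
Let `u` be the first generator of `F = F(x₀, …, x_{s-1})`. Conjugation by `u` can play the role of
`θ` in `F`, and `u ^ (n-1)` that of `b`: sending `b ↦ u ^ (n-1)` and `θʲ(vᵢ) ↦ uʲ (xᵢ u⁻¹) u⁻ʲ`
defines `φ : G →* F` with `φ (θ x) = u φ(x) u⁻¹`. Its image is the subgroup of words whose exponent
sum is divisible by `n - 1`, and it is injective because it has a left inverse into the quotient of
the mapping torus `G ⋊_θ ℤ` by the central element `(b, -(n-1))`. Then `g ↦ φ(g) u` identifies
`(G, f)` with the words of exponent sum `≡ 1 mod (n-1)`, because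
`φ(x₁ θ(x₂) ⋯ θ^{n-1}(xₙ) b) u = φ(x₁) u ⋯ φ(xₙ) u`.
-/

open Multiplicative Function

@[simp]
theorem FreeGroupBasis.lift_apply_basis {ι G H : Type*} [Group G] [Group H]
    (bb : FreeGroupBasis ι G) (f : ι → H) (i : ι) : bb.lift f (bb i) = f i := by
  simp

theorem MulAut.coe_pow {G : Type*} [Group G] (θ : MulAut G) (k : ℕ) : ⇑(θ ^ k) = θ^[k] := by
  induction k with
  | zero => rfl
  | succ k ih => ext; simp [pow_succ, ih, iterate_succ_apply]

theorem Subgroup.zpowers_normal_of_forall_commute {G : Type*} [Group G] {g : G}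
    (h : ∀ x, Commute g x) : (Subgroup.zpowers g).Normal :=
  ⟨by
    rintro _ ⟨k, rfl⟩ x
    rw [← ((h x).zpow_left k).eq, mul_inv_cancel_right]
    exact zpow_mem (mem_zpowers g) k⟩

namespace FreeGroup

variable {X Y : Type*}

def expSum : FreeGroup X →* Multiplicative ℤ :=
  FreeGroup.lift fun _ => ofAdd 1

@[simp]
theorem expSum_of (x : X) : expSum (of x) = ofAdd 1 :=
  lift_apply_of

@[simp]
theorem expSum_map (e : X → Y) (w : FreeGroup X) : expSum (map e w) = expSum w := by
  induction w using FreeGroup.induction_on <;> simp_all [map.of]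

theorem mul_zpow_expSum_inv_mem {H : Subgroup (FreeGroup X)} {x₀ : X}
    (hx₀ : of x₀ ∈ Subgroup.normalizer (H : Set (FreeGroup X)))
    (hgen : ∀ x, of x * (of x₀)⁻¹ ∈ H) (w : FreeGroup X) :
    w * (of x₀ ^ toAdd (expSum w))⁻¹ ∈ H := by
  have conj_mem (k : ℤ) {h} (hh : h ∈ H) : of x₀ ^ k * h * (of x₀ ^ k)⁻¹ ∈ H :=
    (Subgroup.mem_normalizer_iff.mp (zpow_mem hx₀ k) h).mp hh
  induction w using FreeGroup.induction_on with
  | C1 => simp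
  | of x => simpa using hgen x
  | inv_of x _ =>
    simpa [mul_assoc] using conj_mem (-1) (inv_mem (hgen x))
  | mul w w' hw hw' =>
    have := mul_mem hw (conj_mem (toAdd (expSum w)) hw')
    simpa [zpow_add, mul_assoc] using this

end FreeGroup

open FreeGroup (of expSum)

theorem isFreeNAryGroupOfRank_of_equiv {G X : Type*} {n s : ℕ} {f : List G → G} (e : X ≃ Fin s)
    (β : G ≃ {w : FreeGroup X // ((n : ℤ) - 1) ∣ toAdd (expSum w) - 1})
    (hβ : ∀ l : List G, l.length = n →
      (β (f l) : FreeGroup X) = (l.map fun x => (β x : FreeGroup X)).prod) :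
    IsFreeNAryGroupOfRank n s f := by
  refine ⟨expSum, FreeGroup.expSum_of,
    β.trans ((FreeGroup.freeGroupCongr e).toEquiv.subtypeEquiv fun w => ?_), fun l hl => ?_⟩
  · simp
  · simp [hβ l hl, map_list_prod, List.map_map, Function.comp_def]

theorem map_prod_mapIdx_iterate_mul_pow {G H F : Type*} [Group G] [Group H] [FunLike F G G]
    [MonoidHomClass F G G] (θ : F) (φ : G →* H) (u : H) (hθ : ∀ x, φ (θ x) = u * φ x * u⁻¹)
    (l : List G) :
    φ (l.mapIdx fun i x => θ^[i] x).prod * u ^ l.length = (l.map fun x => φ x * u).prod := by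
  induction l with
  | nil => simp
  | cons x l ih =>
    have hshift : (l.mapIdx fun i x => θ^[i + 1] x) = (l.mapIdx fun i x => θ^[i] x).map θ :=
      List.ext_getElem (by simp) fun i _ _ => by simp [iterate_succ_apply']
    rw [List.mapIdx_cons, hshift, List.prod_cons, ← map_list_prod, map_mul, hθ, List.length_cons,
      List.map_cons, List.prod_cons, ← ih, iterate_zero_apply]
    group

theorem isFreeNAryGroupOfRank_of_conj_embedding {G X : Type*} [Group G] {m s : ℕ}
    (e : X ≃ Fin s) (θ : G ≃* G) (b : G) (x₀ : X) (φ : G →* FreeGroup X) (hφ : Injective φ)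
    (hrange : ∀ w, w ∈ φ.range ↔ (m : ℤ) ∣ toAdd (expSum w))
    (hθ : ∀ x, φ (θ x) = of x₀ * φ x * (of x₀)⁻¹) (hb : φ b = of x₀ ^ m) :
    IsFreeNAryGroupOfRank (m + 1) s fun l => (l.mapIdx fun i x => θ^[i] x).prod * b := by
  refine isFreeNAryGroupOfRank_of_equiv e ((MonoidHom.ofInjective hφ).toEquiv.trans
    ((Equiv.mulRight (of x₀)).subtypeEquiv fun w => ?_)) fun l hl => ?_
  · simp [hrange]
  · simp only [Equiv.trans_apply, Equiv.subtypeEquiv_apply, MulEquiv.toEquiv_eq_coe,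
      MulEquiv.coe_toEquiv, MonoidHom.ofInjective_apply, Equiv.coe_mulRight]
    rw [← map_prod_mapIdx_iterate_mul_pow θ φ _ hθ, hl, map_mul, hb, mul_assoc, pow_succ]

open SemidirectProduct

abbrev MappingTorus {G : Type*} [Group G] (θ : G ≃* G) :=
  G ⋊[zpowersHom (MulAut G) θ] Multiplicative ℤ

namespace MappingTorus

variable {G : Type*} [Group G] {θ : G ≃* G}

theorem inl_iterate (k : ℕ) (g : G) :
    (inl (θ^[k] g) : MappingTorus θ) = inr (ofAdd 1) ^ k * inl g * (inr (ofAdd 1) ^ k)⁻¹ := by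
  rw [← map_pow, ← map_inv, ← inl_aut, zpowersHom_apply, ← ofAdd_nsmul]
  simp [MulAut.coe_pow]

variable {b : G} {m : ℕ}

theorem commute_mk (hθb : θ b = b) (hconj : θ ^ m = MulAut.conj b) (x : MappingTorus θ) :
    Commute (⟨b, ofAdd (-(m : ℤ))⟩ : MappingTorus θ) x := by
  have hfix (k : ℤ) : (θ ^ k) b = b :=
    zpow_mem (show θ ∈ MulAction.stabilizer (MulAut G) b from hθb) k
  ext
  · change b * (θ ^ (-(m : ℤ))) x.left = x.left * (θ ^ toAdd x.right) b
    rw [hfix, zpow_neg, zpow_natCast, hconj, MulAut.inv_apply, MulAut.conj_symm_apply]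
    group
  · exact add_comm _ _

theorem inl_mem_zpowers_mk_iff (hm : m ≠ 0) (g : G) :
    (inl g : MappingTorus θ) ∈ Subgroup.zpowers ⟨b, ofAdd (-(m : ℤ))⟩ ↔ g = 1 := by
  refine ⟨fun h => ?_, by rintro rfl; simp⟩
  obtain ⟨k, hk⟩ := Subgroup.mem_zpowers_iff.mp h
  have hk0 : k = 0 := by
    have h := congrArg rightHom hk
    rw [map_zpow, rightHom_inl] at h
    have h' : k * -(m : ℤ) = 0 := congrArg toAdd h
    simpa [hm] using h'
  rw [hk0, zpow_zero, eq_comm, ← map_one inl, inl_inj] at hk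
  exact hk

end MappingTorus

section BasisImage

variable {G ι : Type*} [Group G] {m : ℕ}

def basisImage (m : ℕ) : Unit ⊕ ι × Fin m → FreeGroup (Option ι)
  | .inl _ => of none ^ m
  | .inr (i, j) => of none ^ (j : ℕ) * (of (some i) * (of none)⁻¹) * (of none ^ (j : ℕ))⁻¹

theorem dvd_toAdd_expSum_lift_basisImage (w : FreeGroup (Unit ⊕ ι × Fin m)) :
    (m : ℤ) ∣ toAdd (expSum (FreeGroup.lift (basisImage m) w)) := by
  induction w using FreeGroup.induction_on with
  | C1 => simp
  | of a => rcases a with _ | ⟨i, j⟩ <;> simp [basisImage]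
  | inv_of a h => simpa using h
  | mul w w' h h' => simpa using dvd_add h h'

variable {θ : G ≃* G} {b : G} {v : ι → G} {bb : FreeGroupBasis (Unit ⊕ ι × Fin m) G}

theorem lift_basisImage_apply_mulEquiv (hθb : θ b = b) (hconj : θ ^ m = MulAut.conj b)
    (hbb : bb (.inl ()) = b) (hbv : ∀ i j, bb (.inr (i, j)) = θ^[j] (v i)) (x : G) :
    bb.lift (basisImage m) (θ x) = of none * bb.lift (basisImage m) x * (of none)⁻¹ := by
  have key : (bb.lift (basisImage m)).comp θ.toMonoidHom =
      (MulAut.conj (of none)).toMonoidHom.comp (bb.lift (basisImage m)) := by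
    refine bb.ext_hom _ _ fun a => ?_
    simp only [MonoidHom.comp_apply, MulEquiv.coe_toMonoidHom, MulAut.conj_apply,
      FreeGroupBasis.lift_apply_basis]
    rcases a with ⟨⟩ | ⟨i, j⟩
    · rw [hbb, hθb, ← hbb, FreeGroupBasis.lift_apply_basis]
      simp only [basisImage]
      group
    · rw [hbv, ← iterate_succ_apply' θ]
      by_cases hj : (j : ℕ) + 1 < m
      · rw [← hbv i ⟨j + 1, hj⟩, FreeGroupBasis.lift_apply_basis]
        simp only [basisImage]
        group
      · have hjm : (j : ℕ).succ = m := by omega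
        rw [hjm, ← MulAut.coe_pow, hconj, MulAut.conj_apply, ← iterate_zero_apply θ (v i),
          ← hbv i ⟨0, by omega⟩, map_mul, map_mul, map_inv, ← hbb]
        simp only [FreeGroupBasis.lift_apply_basis, basisImage, ← hjm, Nat.succ_eq_add_one]
        group
  exact DFunLike.congr_fun key x

theorem mem_range_lift_basisImage_iff (hm : m ≠ 0) (hθb : θ b = b)
    (hconj : θ ^ m = MulAut.conj b) (hbb : bb (.inl ()) = b)
    (hbv : ∀ i j, bb (.inr (i, j)) = θ^[j] (v i)) (w : FreeGroup (Option ι)) :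
    w ∈ (bb.lift (basisImage m)).range ↔ (m : ℤ) ∣ toAdd (expSum w) := by
  have hφθ := lift_basisImage_apply_mulEquiv hθb hconj hbb hbv
  set φ := bb.lift (basisImage m)
  constructor
  · rintro ⟨g, rfl⟩
    simpa [φ] using dvd_toAdd_expSum_lift_basisImage (bb.repr g)
  · rintro ⟨c, hc⟩
    have hnorm : of none ∈ Subgroup.normalizer (φ.range : Set (FreeGroup (Option ι))) := by
      refine Subgroup.mem_normalizer_iff.mpr fun h => ⟨?_, ?_⟩
      · rintro ⟨g, rfl⟩
        exact ⟨θ g, hφθ g⟩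
      · rintro ⟨g, hg⟩
        refine ⟨θ.symm g, (MulAut.conj (of none)).injective ?_⟩
        rw [MulAut.conj_apply, MulAut.conj_apply, ← hg, ← hφθ, θ.apply_symm_apply]
    have hgen (x : Option ι) : of x * (of none)⁻¹ ∈ φ.range := by
      cases x with
      | none => simp
      | some i =>
        refine ⟨v i, ?_⟩
        rw [← iterate_zero_apply θ (v i), ← hbv i ⟨0, by omega⟩, FreeGroupBasis.lift_apply_basis]
        simp [basisImage]
    have hpow : of none ^ toAdd (expSum w) ∈ φ.range :=
      ⟨b ^ c, by rw [map_zpow, ← hbb, FreeGroupBasis.lift_apply_basis, basisImage, hc, zpow_mul,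
        zpow_natCast]⟩
    simpa using mul_mem (FreeGroup.mul_zpow_expSum_inv_mem hnorm hgen w) hpow

theorem injective_lift_basisImage (hm : m ≠ 0) (hθb : θ b = b) (hconj : θ ^ m = MulAut.conj b)
    (hbb : bb (.inl ()) = b) (hbv : ∀ i j, bb (.inr (i, j)) = θ^[j] (v i)) :
    Injective (bb.lift (basisImage m)) := by
  let c : MappingTorus θ := ⟨b, ofAdd (-(m : ℤ))⟩
  have : (Subgroup.zpowers c).Normal :=
    Subgroup.zpowers_normal_of_forall_commute (MappingTorus.commute_mk hθb hconj)
  let π := QuotientGroup.mk' (Subgroup.zpowers c)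
  -- `σ ∘ φ` is `inl` on `θʲ(vᵢ)` exactly, and on `b` up to the central element `c`.
  let σ : FreeGroup (Option ι) →* MappingTorus θ :=
    FreeGroup.lift fun x => x.elim (inr (ofAdd 1)) fun i => inl (v i) * inr (ofAdd 1)
  have hσ : (π.comp σ).comp (bb.lift (basisImage m)) = π.comp inl := by
    refine bb.ext_hom _ _ fun a => ?_
    simp only [MonoidHom.comp_apply, FreeGroupBasis.lift_apply_basis]
    rcases a with ⟨⟩ | ⟨i, j⟩
    · have hσu : σ (basisImage m (.inl ())) = inr (ofAdd (m : ℤ)) := by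
        simp only [basisImage, σ, map_pow, FreeGroup.lift_apply_of, Option.elim_none]
        rw [← map_pow, ← ofAdd_nsmul, nsmul_one]
      rw [hbb, hσu, QuotientGroup.mk'_apply, QuotientGroup.mk'_apply, QuotientGroup.eq]
      convert Subgroup.mem_zpowers c using 1
      ext <;> simp [c, hconj]
    · rw [hbv, MappingTorus.inl_iterate]
      simp [basisImage, σ]
  have hinj : Injective (π.comp inl) := by
    refine (injective_iff_map_eq_one _).mpr fun g hg => ?_
    exact (MappingTorus.inl_mem_zpowers_mk_iff hm g).mp ((QuotientGroup.eq_one_iff _).mp hg)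
  exact Injective.of_comp (f := π.comp σ) (by rw [← MonoidHom.coe_comp, hσ]; exact hinj)

end BasisImage

/-- Conversely, if `(G, ·)` is free with a basis `{b} ∪ {θʲ(vᵢ) : 1 ≤ i ≤ s-1, 0 ≤ j ≤ n-2}`,
then `(G, f) = der_{θ,b}(G, ·)` is a free `n`-ary group of rank `s`. -/
theorem free_nary_of_basis {G : Type*} [Group G] (n : ℕ) (hn : 3 ≤ n)
    (s : ℕ) (hs : 1 < s) (θ : G ≃* G) (b : G) (hθb : θ b = b)
    (hconj : ∀ x : G, (⇑θ)^[n - 1] x = b * x * b⁻¹)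
    (v : Fin (s - 1) → G)
    (bb : FreeGroupBasis (Unit ⊕ Fin (s - 1) × Fin (n - 1)) G)
    (hbb : bb (Sum.inl ()) = b)
    (hbv : ∀ (i : Fin (s - 1)) (j : Fin (n - 1)), bb (Sum.inr (i, j)) = (⇑θ)^[(j : ℕ)] (v i)) :
    IsFreeNAryGroupOfRank n s
      (fun l : List G => (l.mapIdx fun i x => (⇑θ)^[i] x).prod * b) := by
  obtain ⟨m, rfl⟩ : ∃ m, n = m + 1 := ⟨n - 1, by omega⟩
  obtain ⟨k, rfl⟩ : ∃ k, s = k + 1 := ⟨s - 1, by omega⟩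
  have hconj' : θ ^ m = MulAut.conj b := MulEquiv.ext fun x => by
    rw [MulAut.coe_pow]
    exact hconj x
  have hm : m ≠ 0 := by omega
  exact isFreeNAryGroupOfRank_of_conj_embedding (finSuccEquiv k).symm θ b none
    (bb.lift (basisImage m)) (injective_lift_basisImage hm hθb hconj' hbb hbv)
    (mem_range_lift_basisImage_iff hm hθb hconj' hbb hbv)
    (lift_basisImage_apply_mulEquiv hθb hconj' hbb hbv)
    (by rw [← hbb, FreeGroupBasis.lift_apply_basis]; rfl)
end

section
/- Let (G,f) be the free n-ary group on a set X (n ≥ 3), realized as {w ∈ F(X) : ht(w) ≡ 1 mod (n−1)} ⊆ F(X) with f the n-fold product. Then F(X) is the Post cover of (G,f): F(X) is generated by G, G is a coset of the normal subgroup H = {w : ht(w) ≡ 0 mod (n−1)}, F(X)/H ≅ ℤ/(n−1)ℤ, and for any group (K,∗) and any map β: G → K satisfying β(f(w₁,…,wₙ)) = β(w₁)∗⋯∗β(wₙ), there is a unique group homomorphism h: F(X) → K with h|_G = β. -/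
/-!
Every `w` factors as `(w * e ^ (-ht w)) * e ^ ht w` with first factor in `H`, where `e` is a
letter, of height one. An `n`-ary-product-preserving `β` on the coset `H e` yields a
homomorphism `φ u = β (u e) * (β e)⁻¹` on `H`, which intertwines conjugation by `e` with
conjugation by `β e` and sends `e ^ (n - 1)` to `(β e) ^ (n - 1)`. Hence
`w ↦ φ (w * e ^ (-ht w)) * (β e) ^ ht w` is a homomorphism extending `β`; it is unique because
the coset contains `e` and so generates.
-/

open Multiplicative

theorem Function.Semiconj.mulAut_zpow {M N : Type*} [Mul M] [Mul N] {f : M → N}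
    {σ : MulAut M} {τ : MulAut N} (h : Function.Semiconj f σ τ) (s : ℤ) :
    Function.Semiconj f ⇑(σ ^ s) ⇑(τ ^ s) := by
  induction s using Int.induction_on with
  | zero => exact Function.Semiconj.id_right
  | succ s ih => rw [zpow_add_one, zpow_add_one]; exact ih.comp_right h
  | pred s ih =>
    rw [zpow_sub_one, zpow_sub_one]
    exact ih.comp_right (h.inverses_right σ.apply_symm_apply τ.symm_apply_apply)

section NaryProduct

variable {G K : Type*} [Group G] [Group K]

def PreservesNaryProd (n : ℕ) (S : Set G) (B : G → K) : Prop :=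
  ∀ l : List G, l.length = n → (∀ a ∈ l, a ∈ S) → B l.prod = (l.map B).prod

variable {n : ℕ} {S : Set G} {B : G → K}

theorem PreservesNaryProd.map_mul_pow_mul_pow (hB : PreservesNaryProd n S B) {a b e : G}
    (ha : a ∈ S) (hb : b ∈ S) (he : e ∈ S) {k l : ℕ} (hkl : k + l + 2 = n) :
    B (a * e ^ k * (b * e ^ l)) = B a * B e ^ k * (B b * B e ^ l) := by
  have := hB (a :: (List.replicate k e ++ b :: List.replicate l e)) (by simp; omega)
    (by simp only [List.mem_cons, List.mem_append, List.mem_replicate]; aesop)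
  simpa [List.prod_replicate, mul_assoc] using this

theorem PreservesNaryProd.map_pow (hB : PreservesNaryProd n S B) {e : G} (he : e ∈ S) :
    B (e ^ n) = B e ^ n := by
  simpa [List.prod_replicate] using hB (List.replicate n e) (by simp) (by simp [he])

end NaryProduct

section Coset

variable {G K : Type*} [Group G] [Group K] {H : Subgroup G} {e : G} {n : ℕ} {B : G → K}

theorem PreservesNaryProd.map_mul_mul (hB : PreservesNaryProd n {g | g * e⁻¹ ∈ H} B)
    (hn : 2 ≤ n) (hen : e ^ ((n : ℤ) - 1) ∈ H) {u v : G} (hu : u ∈ H) (hv : v ∈ H) :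
    B (u * v * e) = B (u * e) * (B e)⁻¹ * B (v * e) := by
  -- `u v e` and `v e` are the `n`-ary products `(u e) e^(n-2) b` and `e e^(n-2) b`
  obtain ⟨m, rfl⟩ := Nat.exists_eq_add_of_le' hn
  set b := e ^ (-((m : ℤ) + 1)) * v * e
  have hb : b * e⁻¹ ∈ H := by
    rw [show b * e⁻¹ = (e ^ ((↑(m + 2) : ℤ) - 1))⁻¹ * v by simp only [b]; push_cast; group]
    exact H.mul_mem (H.inv_mem hen) hv
  have he : e * e⁻¹ ∈ H := by simp
  have hu_b := hB.map_mul_pow_mul_pow (a := u * e) (by simpa) hb he (k := m) (l := 0) (by omega)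
  have he_b := hB.map_mul_pow_mul_pow (a := e) he hb he (k := m) (l := 0) (by omega)
  have huv : u * e * e ^ m * (b * e ^ 0) = u * v * e := by simp only [b]; group
  have hv' : e * e ^ m * (b * e ^ 0) = v * e := by simp only [b]; group
  rw [← huv, hu_b, ← hv', he_b]
  group

theorem PreservesNaryProd.map_mul_swap [H.Normal]
    (hB : PreservesNaryProd n {g | g * e⁻¹ ∈ H} B) (hn : 2 ≤ n) {z : G} (hz : z ∈ H) :
    B (e * z) * B e = B e * B (z * e) := by
  obtain ⟨m, rfl⟩ := Nat.exists_eq_add_of_le' hn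
  have he : e * e⁻¹ ∈ H := by simp
  have hez := hB.map_mul_pow_mul_pow (a := e * z) (‹H.Normal›.conj_mem z hz e) he he
    (k := 0) (l := m) (by omega)
  have hze := hB.map_mul_pow_mul_pow (a := e) (b := z * e) he (by simpa) he
    (k := 0) (l := m) (by omega)
  rw [show e * e ^ 0 * (z * e * e ^ m) = e * z * e ^ 0 * (e * e ^ m) by group, hez] at hze
  simp only [pow_zero, mul_one, ← mul_assoc] at hze
  exact mul_right_cancel hze

def PreservesNaryProd.cosetHom (hB : PreservesNaryProd n {g | g * e⁻¹ ∈ H} B)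
    (hn : 2 ≤ n) (hen : e ^ ((n : ℤ) - 1) ∈ H) : H →* K :=
  MonoidHom.mk' (fun u => B (u * e) * (B e)⁻¹) fun u v => by
    simp only [Subgroup.coe_mul, hB.map_mul_mul hn hen u.2 v.2]
    group

theorem PreservesNaryProd.cosetHom_apply (hB : PreservesNaryProd n {g | g * e⁻¹ ∈ H} B)
    (hn : 2 ≤ n) (hen : e ^ ((n : ℤ) - 1) ∈ H) (u : H) :
    hB.cosetHom hn hen u = B (u * e) * (B e)⁻¹ :=
  rfl

theorem PreservesNaryProd.cosetHom_conjNormal [H.Normal]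
    (hB : PreservesNaryProd n {g | g * e⁻¹ ∈ H} B) (hn : 2 ≤ n) (hen : e ^ ((n : ℤ) - 1) ∈ H)
    (s : ℤ) (z : H) :
    hB.cosetHom hn hen (MulAut.conjNormal (e ^ s) z) =
      B e ^ s * hB.cosetHom hn hen z * (B e ^ s)⁻¹ := by
  rw [map_zpow (MulAut.conjNormal (H := H)), ← MulAut.conj_apply, map_zpow MulAut.conj]
  refine Function.Semiconj.mulAut_zpow (fun z => ?_) s z
  have := hB.map_mul_swap hn z.2
  simp only [cosetHom_apply, MulAut.conjNormal_apply, MulAut.conj_apply, inv_mul_cancel_right]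
  rw [mul_inv_eq_iff_eq_mul, eq_mul_inv_of_mul_eq this]
  group

theorem PreservesNaryProd.cosetHom_zpow_sub_one (hB : PreservesNaryProd n {g | g * e⁻¹ ∈ H} B)
    (hn : 2 ≤ n) (hen : e ^ ((n : ℤ) - 1) ∈ H) :
    hB.cosetHom hn hen ⟨_, hen⟩ = B e ^ ((n : ℤ) - 1) := by
  have he : e * e⁻¹ ∈ H := by simp
  rw [cosetHom_apply, show e ^ ((n : ℤ) - 1) * e = e ^ n by group, hB.map_pow he]
  group

end Coset

section Height

variable {G K : Type*} [Group G] [Group K] {ht : G →* Multiplicative ℤ} {d : ℤ}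

theorem dvd_toAdd_list_prod_sub_length (l : List G) (hl : ∀ a ∈ l, d ∣ toAdd (ht a) - 1) :
    d ∣ toAdd (ht l.prod) - l.length := by
  induction l with
  | nil => simp
  | cons a l ih =>
    rw [show toAdd (ht (a :: l).prod) - ((a :: l).length : ℤ)
        = (toAdd (ht a) - 1) + (toAdd (ht l.prod) - l.length) by
      simp only [List.prod_cons, map_mul, toAdd_mul, List.length_cons, Nat.cast_succ]; ring]
    exact dvd_add (hl a List.mem_cons_self) (ih fun b hb => hl b (List.mem_cons_of_mem a hb))

theorem list_prod_mem_of_dvd_sub_one {n : ℕ} {S : Set G}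
    (hS : ∀ w, w ∈ S ↔ ((n : ℤ) - 1) ∣ toAdd (ht w) - 1) {l : List G} (hl : l.length = n)
    (hmem : ∀ a ∈ l, a ∈ S) : l.prod ∈ S := by
  have := dvd_toAdd_list_prod_sub_length l fun a ha => (hS a).1 (hmem a ha)
  rw [hS, show toAdd (ht l.prod) - 1 = toAdd (ht l.prod) - l.length + (n - 1) by rw [hl]; ring]
  exact dvd_add this dvd_rfl

theorem preservesNaryProd_extend_val {n : ℕ} {S : Set G}
    (hS : ∀ w, w ∈ S ↔ ((n : ℤ) - 1) ∣ toAdd (ht w) - 1) {β : S → K}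
    (hβ : ∀ (l : List S) (w : S), l.length = n →
      (w : G) = (l.map Subtype.val).prod → β w = (l.map β).prod) :
    PreservesNaryProd n S (Function.extend Subtype.val β 1) := by
  intro l hl hmem
  have hprod := list_prod_mem_of_dvd_sub_one hS hl hmem
  have := hβ (l.pmap Subtype.mk hmem) ⟨l.prod, hprod⟩ (by simp [hl]) (by simp [List.map_pmap])
  rw [Subtype.val_injective.extend_apply (a := ⟨l.prod, hprod⟩), this, List.map_pmap,
    ← List.pmap_eq_map hmem]
  exact congrArg List.prod (List.pmap_congr_left _ fun a _ ha _ =>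
    (Subtype.val_injective.extend_apply β 1 ⟨a, ha⟩).symm)

theorem normal_of_forall_mem_iff_dvd {H : Subgroup G} (hH : ∀ w, w ∈ H ↔ d ∣ toAdd (ht w)) :
    H.Normal :=
  ⟨fun z hz g => by rw [hH] at hz ⊢; simpa using hz⟩

theorem mem_iff_mul_inv_mem_of_mem {S : Set G} (hS : ∀ w, w ∈ S ↔ d ∣ toAdd (ht w) - 1)
    {H : Subgroup G} (hH : ∀ w, w ∈ H ↔ d ∣ toAdd (ht w)) {w₀ : G} (hw₀ : w₀ ∈ S) (w : G) :
    w ∈ S ↔ w * w₀⁻¹ ∈ H := by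
  rw [hS, hH, map_mul, map_inv, toAdd_mul, toAdd_inv, ← sub_eq_add_neg,
    show toAdd (ht w) - toAdd (ht w₀) = toAdd (ht w) - 1 - (toAdd (ht w₀) - 1) by ring,
    dvd_sub_left ((hS w₀).1 hw₀)]

theorem eq_image_mul_right_of_mem {S : Set G} (hS : ∀ w, w ∈ S ↔ d ∣ toAdd (ht w) - 1)
    {H : Subgroup G} (hH : ∀ w, w ∈ H ↔ d ∣ toAdd (ht w)) {w₀ : G} (hw₀ : w₀ ∈ S) :
    S = (· * w₀) '' (H : Set G) := by
  ext w
  rw [Set.image_mul_right, Set.mem_preimage, SetLike.mem_coe, mem_iff_mul_inv_mem_of_mem hS hH hw₀]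

theorem closure_eq_top_of_dvd_sub_one {S : Set G} (hS : ∀ w, w ∈ S ↔ d ∣ toAdd (ht w) - 1)
    {e : G} (he : ht e = ofAdd 1) : Subgroup.closure S = ⊤ := by
  refine eq_top_iff.2 fun w _ => ?_
  have heS : e ∈ S := by simp [hS, he]
  have hw : w * e ^ (1 - toAdd (ht w)) ∈ S := by simp [hS, he]
  rw [show w = w * e ^ (1 - toAdd (ht w)) * e ^ (toAdd (ht w) - 1) by group]
  exact mul_mem (Subgroup.subset_closure hw) (zpow_mem (Subgroup.subset_closure heS) _)

theorem exists_surjective_ker_eq {m : ℕ} {H : Subgroup G}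
    (hH : ∀ w, w ∈ H ↔ (m : ℤ) ∣ toAdd (ht w)) {e : G} (he : ht e = ofAdd 1) :
    ∃ φ : G →* Multiplicative (ZMod m), Function.Surjective φ ∧ φ.ker = H := by
  refine ⟨(AddMonoidHom.toMultiplicative (Int.castAddHom (ZMod m))).comp ht, fun a => ?_, ?_⟩
  · obtain ⟨z, hz⟩ := ZMod.intCast_surjective (toAdd a)
    exact ⟨e ^ z, by simp [he, hz]⟩
  · ext w
    rw [MonoidHom.mem_ker, hH, ← ZMod.intCast_zmod_eq_zero_iff_dvd]
    simp [ofAdd_eq_one]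

theorem exists_monoidHom_eq_on_coset {n : ℕ} {H : Subgroup G}
    (hH : ∀ w, w ∈ H ↔ ((n : ℤ) - 1) ∣ toAdd (ht w)) {e : G} (he : ht e = ofAdd 1) (hn : 2 ≤ n)
    {B : G → K} (hB : PreservesNaryProd n {g | g * e⁻¹ ∈ H} B) :
    ∃ h : G →* K, ∀ g, g * e⁻¹ ∈ H → h g = B g := by
  have := normal_of_forall_mem_iff_dvd hH
  have hen : e ^ ((n : ℤ) - 1) ∈ H := by simp [hH, he]
  have hnormalize (w : G) : w * e ^ (-toAdd (ht w)) ∈ H := by simp [hH, he]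
  refine ⟨MonoidHom.mk' (fun w => hB.cosetHom hn hen ⟨_, hnormalize w⟩ * B e ^ toAdd (ht w))
    fun u v => ?_, fun g hg => ?_⟩
  · have hsplit : (⟨_, hnormalize (u * v)⟩ : H)
        = ⟨_, hnormalize u⟩ * MulAut.conjNormal (e ^ toAdd (ht u)) ⟨_, hnormalize v⟩ := by
      ext
      simp only [map_mul, toAdd_mul, Subgroup.coe_mul, MulAut.conjNormal_apply]
      group
    rw [hsplit, map_mul, hB.cosetHom_conjNormal, map_mul, toAdd_mul]
    group
  · obtain ⟨q, hq⟩ := (hH _).1 hg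
    have hg_height : toAdd (ht g) = ((n : ℤ) - 1) * q + 1 := by simp [he] at hq; linarith
    have hsplit : (⟨_, hnormalize g⟩ : H) = ⟨_, hg⟩ * ⟨_, hen⟩ ^ (-q) := by
      ext
      simp only [Subgroup.coe_mul, Subgroup.coe_zpow, hg_height]
      group
    rw [MonoidHom.mk'_apply, hsplit, map_mul, map_zpow, hB.cosetHom_zpow_sub_one,
      hB.cosetHom_apply, inv_mul_cancel_right, hg_height]
    group

theorem existsUnique_monoidHom_eq_of_map_nary_prod {n : ℕ} {S : Set G}
    (hS : ∀ w, w ∈ S ↔ ((n : ℤ) - 1) ∣ toAdd (ht w) - 1) {H : Subgroup G}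
    (hH : ∀ w, w ∈ H ↔ ((n : ℤ) - 1) ∣ toAdd (ht w)) {e : G} (he : ht e = ofAdd 1) (hn : 2 ≤ n)
    (β : S → K) (hβ : ∀ (l : List S) (w : S), l.length = n →
      (w : G) = (l.map Subtype.val).prod → β w = (l.map β).prod) :
    ∃! h : G →* K, ∀ g : S, h g = β g := by
  have hSe := mem_iff_mul_inv_mem_of_mem hS hH (w₀ := e) (by simp [hS, he])
  have hB := preservesNaryProd_extend_val hS hβ
  obtain ⟨h, hh⟩ := exists_monoidHom_eq_on_coset hH he hn (B := Function.extend Subtype.val β 1)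
    fun l hl hmem => hB l hl fun a ha => (hSe a).2 (hmem a ha)
  have hextend (g : S) : h g = β g :=
    (hh g ((hSe g).1 g.2)).trans (Subtype.val_injective.extend_apply β 1 g)
  refine ⟨h, hextend, fun h' hh' => ?_⟩
  exact MonoidHom.eq_of_eqOn_dense (closure_eq_top_of_dvd_sub_one hS he) fun g hg =>
    (hh' ⟨g, hg⟩).trans (hextend ⟨g, hg⟩).symm

end Height

/-- `F(X)` is the Post cover of the free `n`-ary group
`G = {w ∈ F(X) : ht w ≡ 1 mod (n-1)}`: `F(X)` is generated by `G`, `G` is a coset of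
the normal subgroup `H = {w : ht w ≡ 0 mod (n-1)}`, `F(X)/H ≅ ℤ/(n-1)ℤ`, and every
`n`-ary-product-preserving map from `G` to a group extends uniquely to a homomorphism
on `F(X)`. -/
theorem free_group_is_post_cover {X : Type*} [Nonempty X] (n : ℕ) (hn : 3 ≤ n)
    (ht : FreeGroup X →* Multiplicative ℤ)
    (hht : ∀ x : X, ht (FreeGroup.of x) = Multiplicative.ofAdd 1)
    (Gs : Set (FreeGroup X))
    (hGs : ∀ w : FreeGroup X, w ∈ Gs ↔ ((n : ℤ) - 1) ∣ (Multiplicative.toAdd (ht w) - 1))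
    (H : Subgroup (FreeGroup X))
    (hH : ∀ w : FreeGroup X, w ∈ H ↔ ((n : ℤ) - 1) ∣ Multiplicative.toAdd (ht w)) :
    Subgroup.closure Gs = ⊤ ∧
    H.Normal ∧
    (∀ w₀ ∈ Gs, Gs = (fun h => h * w₀) '' (H : Set (FreeGroup X))) ∧
    (∃ φ : FreeGroup X →* Multiplicative (ZMod (n - 1)),
      Function.Surjective φ ∧ φ.ker = H) ∧
    (∀ (K : Type) (_ : Group K) (β : Gs → K),
      (∀ (l : List Gs) (w : Gs), l.length = n →
        (w : FreeGroup X) = (l.map Subtype.val).prod → β w = (l.map β).prod) →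
      ∃! h : FreeGroup X →* K, ∀ g : Gs, h g = β g) := by
  have he := hht (Classical.arbitrary X)
  have hH' : ∀ w, w ∈ H ↔ ((n - 1 : ℕ) : ℤ) ∣ toAdd (ht w) := by
    rwa [Nat.cast_sub (by omega), Nat.cast_one]
  exact ⟨closure_eq_top_of_dvd_sub_one hGs he, normal_of_forall_mem_iff_dvd hH,
    fun w₀ hw₀ => eq_image_mul_right_of_mem hGs hH hw₀, exists_surjective_ker_eq hH' he,
    fun K _ β hβ => existsUnique_monoidHom_eq_of_map_nary_prod hGs hH he (by omega) β hβ⟩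
end
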